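/- arXiv:1006.4333 — 6 statements merged into one kernel-verified Lean document; each statement's English description precedes it below -/
import Mathlib

section
/- Let G be a finite directed graph without loops or 2-cycles and without isolated nodes. Then G is block-decomposable if and only if every connected component of G is block-decomposable. -/
/-- The six block shapes: spike, triangle, infork, outfork, diamond, square. -/
inductive BlockShape : Type
  | spike | triangle | infork | outfork | diamond | square
  deriving DecidableEq

namespace BlockShape

/-- Number of nodes of each block shape. -/
def numNodes : BlockShape → ℕ
  | spike => 2
  | triangle => 3
  | infork => 3
  | outfork => 3
  | diamond => 4
  | square => 5

/-- The directed edges of each block shape.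
For the spike the nodes are `x = 0, y = 1` with edge `x → y`.
For the triangle the nodes are `0, 1, 2` with edges `0 → 1 → 2 → 0`.
For the infork the nodes are `x = 0, y = 1, c = 2` with edges `x → c`, `y → c`.
For the outfork the nodes are `x = 0, y = 1, c = 2` with edges `c → x`, `c → y`.
For the diamond the nodes are `p = 0, q = 1, x = 2, y = 3` with boundary edges
`p → x, x → q, q → y, y → p` and mid-edge `q → p`.
For the square the nodes are the center `c = 0` and corners `v1 = 1, …, v4 = 4`, with
edges `v1 → v2 → v3 → v4 → v1`, `c → v1`, `v2 → c`, `c → v3`, `v4 → c`. -/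
def edges : (s : BlockShape) → List (Fin s.numNodes × Fin s.numNodes)
  | spike => ([(0, 1)] : List (Fin 2 × Fin 2))
  | triangle => ([(0, 1), (1, 2), (2, 0)] : List (Fin 3 × Fin 3))
  | infork => ([(0, 2), (1, 2)] : List (Fin 3 × Fin 3))
  | outfork => ([(2, 0), (2, 1)] : List (Fin 3 × Fin 3))
  | diamond => ([(0, 2), (2, 1), (1, 3), (3, 0), (1, 0)] : List (Fin 4 × Fin 4))
  | square => ([(1, 2), (2, 3), (3, 4), (4, 1), (0, 1), (2, 0), (0, 3), (4, 0)] :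
      List (Fin 5 × Fin 5))

/-- The outlets (white nodes) of each block shape. -/
def IsOutlet : (s : BlockShape) → Fin s.numNodes → Prop
  | spike, _ => True
  | triangle, _ => True
  | infork, i => (i : ℕ) = 2
  | outfork, i => (i : ℕ) = 2
  | diamond, i => (i : ℕ) = 0 ∨ (i : ℕ) = 1
  | square, i => (i : ℕ) = 0

/-- The degree of a node inside its block (number of incident edges). -/
def blockDeg (s : BlockShape) (i : Fin s.numNodes) : ℕ :=
  s.edges.countP fun e => decide (e.1 = i) || decide (e.2 = i)

end BlockShape

/-- A directed multigraph on a vertex type `V` is given by its edge multiplicity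
function `G : V → V → ℕ`.  It is a directed graph in our sense if it has no loops
and no 2-cycles. -/
def IsDiGraph {V : Type} (G : V → V → ℕ) : Prop :=
  (∀ v, G v v = 0) ∧ ∀ x y, G x y = 0 ∨ G y x = 0

/-- Degree of a node: the number of incident edges counted with multiplicity. -/
def degree {V : Type} [Fintype V] (G : V → V → ℕ) (v : V) : ℕ :=
  ∑ w, (G v w + G w v)

/-- Two nodes are adjacent if some edge joins them (in either direction). -/
def Adj {V : Type} (G : V → V → ℕ) (x y : V) : Prop := 0 < G x y + G y x

/-- `Reach G x y` : `y` lies in the connected component of `x`. -/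
def Reach {V : Type} (G : V → V → ℕ) : V → V → Prop := Relation.ReflTransGen (Adj G)

/-- The connected component of a node, as a finset. -/
noncomputable def component {V : Type} [Fintype V] (G : V → V → ℕ) (v : V) : Finset V :=
  letI := Classical.decPred fun w => Reach G v w
  Finset.univ.filter (Reach G v)

/-- Total number of block edges mapped onto the ordered pair `(x, y)` by the gluing data. -/
def blockMult {V : Type} [DecidableEq V] (n : ℕ) (shape : Fin n → BlockShape)
    (emb : (b : Fin n) → Fin (shape b).numNodes → V) (x y : V) : ℕ :=
  ∑ b : Fin n, (shape b).edges.countP fun e => decide (emb b e.1 = x ∧ emb b e.2 = y)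

/-- A block decomposition of the directed multigraph `G` : a finite collection of blocks
together with an identification of their nodes with the nodes of `G` such that
* each block is embedded injectively,
* nodes of two distinct blocks may be identified only if both are outlets,
* each outlet is identified with at most one other outlet (no vertex lies in three blocks),
* every vertex of `G` comes from some block, and
* the multiplicity of each edge of `G` is the number of block edges giving it minus the
  number of block edges giving the reversed edge (two parallel edges with the same
  direction are kept as a double edge; two parallel edges with opposite directions
  annihilate each other). -/
structure BlockDecomposition {V : Type} [Fintype V] [DecidableEq V] (G : V → V → ℕ) :
    Type where
  n : ℕ
  shape : Fin n → BlockShape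
  emb : (b : Fin n) → Fin (shape b).numNodes → V
  emb_inj : ∀ b, Function.Injective (emb b)
  glue_outlets : ∀ (b c : Fin n) (i : Fin (shape b).numNodes) (j : Fin (shape c).numNodes),
    emb b i = emb c j → b ≠ c → (shape b).IsOutlet i ∧ (shape c).IsOutlet j
  atMostTwo : ∀ (b c d : Fin n) (i : Fin (shape b).numNodes) (j : Fin (shape c).numNodes)
    (k : Fin (shape d).numNodes), emb b i = emb c j → emb b i = emb d k →
    b = c ∨ b = d ∨ c = d
  covers : ∀ v : V, ∃ b i, emb b i = v
  edge_eq : ∀ x y : V, G x y = blockMult n shape emb x y - blockMult n shape emb y x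

/-- The number of block edges of a decomposition lying over the ordered pair `(x, y)`. -/
def BlockDecomposition.mult {V : Type} [Fintype V] [DecidableEq V] {G : V → V → ℕ}
    (D : BlockDecomposition G) : V → V → ℕ :=
  blockMult D.n D.shape D.emb

/-- A graph is (block-)decomposable if it admits a block decomposition. -/
def Decomposable {V : Type} [Fintype V] [DecidableEq V] (G : V → V → ℕ) : Prop :=
  Nonempty (BlockDecomposition G)

/-- The edge `e` of block `b` is annihilated in the decomposition `D` : some edge of
another block lies over the same pair of vertices with the opposite direction. -/
def BlockDecomposition.EdgeAnnihilated {V : Type} [Fintype V] [DecidableEq V]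
    {G : V → V → ℕ} (D : BlockDecomposition G) (b : Fin D.n)
    (e : Fin (D.shape b).numNodes × Fin (D.shape b).numNodes) : Prop :=
  e ∈ (D.shape b).edges ∧
    ∃ (c : Fin D.n) (f : Fin (D.shape c).numNodes × Fin (D.shape c).numNodes),
      c ≠ b ∧ f ∈ (D.shape c).edges ∧ D.emb c f.1 = D.emb b e.2 ∧ D.emb c f.2 = D.emb b e.1

/-!
Without isolated nodes, every block of a decomposition lies in a single connected component.
An edge of a block can only disappear if another block contributes the reversed edge; both
endpoints are then outlets shared by exactly these two blocks, so each of the two blocks is a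
spike, a triangle or a diamond with that edge as mid-edge. A diamond keeps the path through its
dead end, a triangle keeps the path through its third node, and in the remaining cases (two
spikes, or two triangles with the same third node) the two blocks cancel completely at an
endpoint, which is then isolated. As blocks have diameter at most two, all their nodes are in one
component. Hence a decomposition restricts to every component, and decompositions of the
components can be put side by side.
-/

namespace BlockShape

instance : ∀ s : BlockShape, DecidablePred s.IsOutlet := by
  intro s; cases s <;> unfold IsOutlet <;> infer_instance

theorem exists_common_neighbor (s : BlockShape) (i j : Fin s.numNodes) :
    ∃ k, ∀ m ∈ [i, j], m = k ∨ (m, k) ∈ s.edges ∨ (k, m) ∈ s.edges := by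
  revert i j; cases s <;> decide

theorem swap_notMem_edges {s : BlockShape} {i j : Fin s.numNodes} (h : (i, j) ∈ s.edges) :
    (j, i) ∉ s.edges := by
  revert i j; cases s <;> decide

theorem eq_spike_or_eq_triangle_or_exists_detour {s : BlockShape} {i j : Fin s.numNodes}
    (h : (i, j) ∈ s.edges) (hi : s.IsOutlet i) (hj : s.IsOutlet j) :
    s = spike ∨ s = triangle ∨
      ∃ k, ¬ s.IsOutlet k ∧ (i, k) ∈ s.edges ∧ (k, j) ∈ s.edges := by
  revert i j; cases s <;> decide

theorem edges_of_eq_spike {s : BlockShape} (hs : s = spike) {i j : Fin s.numNodes}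
    (h : (i, j) ∈ s.edges) : s.edges = [(i, j)] ∧ ∀ m, m = i ∨ m = j := by
  subst hs; revert i j; decide

theorem exists_third_of_eq_triangle {s : BlockShape} (hs : s = triangle) {i j : Fin s.numNodes}
    (h : (i, j) ∈ s.edges) : ∃ k, k ≠ i ∧ k ≠ j ∧
      s.edges.Perm [(i, j), (j, k), (k, i)] ∧ ∀ m, m = i ∨ m = j ∨ m = k := by
  subst hs; revert i j; decide

end BlockShape

section Graph

variable {V : Type} {G : V → V → ℕ} {u v w : V}

theorem Adj.symm (h : Adj G v w) : Adj G w v := by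
  unfold Adj at *; omega

theorem Adj.reach (h : Adj G v w) : Reach G v w :=
  Relation.ReflTransGen.single h

theorem Reach.symm (h : Reach G v w) : Reach G w v :=
  haveI : Std.Symm (Adj G) := ⟨fun _ _ => Adj.symm⟩
  Relation.ReflTransGen.stdSymm.symm _ _ h

theorem Reach.trans (h₁ : Reach G u v) (h₂ : Reach G v w) : Reach G u w :=
  Relation.ReflTransGen.trans h₁ h₂

variable [Fintype V]

theorem mem_component_iff : w ∈ component G v ↔ Reach G v w := by
  classical
  simp [component]

theorem component_eq_of_mem (h : w ∈ component G v) : component G w = component G v := by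
  ext u
  simp only [mem_component_iff] at h ⊢
  exact ⟨h.trans, h.symm.trans⟩

theorem eq_zero_of_mem_component_of_notMem (hv : v ∈ component G u) (hw : w ∉ component G u) :
    G v w = 0 := by
  by_contra hvw
  refine hw (mem_component_iff.2 ((mem_component_iff.1 hv).trans (Adj.reach ?_)))
  unfold Adj; omega

end Graph

section Family

variable {V ι : Type} {G : V → V → ℕ} {shape : ι → BlockShape}
  (emb : (b : ι) → Fin (shape b).numNodes → V)

def blockEdges (b : ι) : List (V × V) :=
  (shape b).edges.map fun e => (emb b e.1, emb b e.2)

variable {emb}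

theorem mem_blockEdges {b : ι} {x y : V} :
    (x, y) ∈ blockEdges emb b ↔ ∃ e ∈ (shape b).edges, emb b e.1 = x ∧ emb b e.2 = y := by
  simp [blockEdges]

theorem count_blockEdges_comp {W : Type} [DecidableEq V] [DecidableEq W] {f : W → V}
    (hf : Function.Injective f) {emb : (b : ι) → Fin (shape b).numNodes → W} (b : ι)
    (x y : W) :
    (blockEdges (fun b i => f (emb b i)) b).count (f x, f y) = (blockEdges emb b).count (x, y) := by
  rw [← List.count_map_of_injective _ (Prod.map f f) (hf.prodMap hf), blockEdges, blockEdges,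
    List.map_map]
  rfl

variable [DecidableEq V] [Fintype ι]

variable (emb) in
def edgeCount (x y : V) : ℕ :=
  ∑ b, (blockEdges emb b).count (x, y)

theorem blockMult_eq_edgeCount {n : ℕ} {shape : Fin n → BlockShape}
    (emb : (b : Fin n) → Fin (shape b).numNodes → V) (x y : V) :
    blockMult n shape emb x y = edgeCount emb x y := by
  refine Finset.sum_congr rfl fun b _ => ?_
  rw [blockEdges, List.count, List.countP_map]
  congr 1
  funext e
  rw [Bool.eq_iff_iff]
  simp

theorem edgeCount_eq_zero {x y : V} (h : ∀ b, (x, y) ∉ blockEdges emb b) :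
    edgeCount emb x y = 0 :=
  Finset.sum_eq_zero fun b _ => List.count_eq_zero.2 (h b)

theorem exists_mem_blockEdges_of_edgeCount_ne_zero {x y : V} (h : edgeCount emb x y ≠ 0) :
    ∃ b, (x, y) ∈ blockEdges emb b := by
  by_contra! h'
  exact h (edgeCount_eq_zero h')

theorem edgeCount_pos {b : ι} {x y : V} (h : (x, y) ∈ blockEdges emb b) :
    0 < edgeCount emb x y :=
  calc 0 < (blockEdges emb b).count (x, y) := List.count_pos_iff.2 h
    _ ≤ edgeCount emb x y := Finset.single_le_sum (f := fun b => (blockEdges emb b).count (x, y))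
          (fun _ _ => Nat.zero_le _) (Finset.mem_univ b)

variable (G) (emb) in
/-- `BlockDecomposition` as a property of a family of blocks indexed by any finite type. -/
structure IsBlockDecomposition : Prop where
  emb_inj : ∀ b, Function.Injective (emb b)
  glue_outlets : ∀ (b c : ι) (i : Fin (shape b).numNodes) (j : Fin (shape c).numNodes),
    emb b i = emb c j → b ≠ c → (shape b).IsOutlet i ∧ (shape c).IsOutlet j
  atMostTwo : ∀ (b c d : ι) (i : Fin (shape b).numNodes) (j : Fin (shape c).numNodes)
    (k : Fin (shape d).numNodes), emb b i = emb c j → emb b i = emb d k →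
    b = c ∨ b = d ∨ c = d
  covers : ∀ v : V, ∃ b i, emb b i = v
  edge_eq : ∀ x y : V, G x y = edgeCount emb x y - edgeCount emb y x

end Family

theorem BlockDecomposition.isBlockDecomposition {V : Type} [Fintype V] [DecidableEq V]
    {G : V → V → ℕ} (D : BlockDecomposition G) : IsBlockDecomposition G D.emb where
  emb_inj := D.emb_inj
  glue_outlets := D.glue_outlets
  atMostTwo := D.atMostTwo
  covers := D.covers
  edge_eq x y := by simpa only [blockMult_eq_edgeCount] using D.edge_eq x y

namespace IsBlockDecomposition

open BlockShape

variable {V ι : Type} [DecidableEq V] [Fintype ι] {G : V → V → ℕ} {shape : ι → BlockShape}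
  {emb : (b : ι) → Fin (shape b).numNodes → V}

theorem decomposable [Fintype V] (h : IsBlockDecomposition G emb) : Decomposable G := by
  let e := (Fintype.equivFin ι).symm
  have hcount (x y : V) :
      blockMult _ (shape ∘ e) (fun k => emb (e k)) x y = edgeCount emb x y := by
    rw [blockMult_eq_edgeCount]
    exact e.sum_comp fun b => (blockEdges emb b).count (x, y)
  refine ⟨⟨Fintype.card ι, shape ∘ e, fun k => emb (e k), fun k => h.emb_inj (e k),
    fun k l i j hij hkl => h.glue_outlets _ _ i j hij (e.injective.ne hkl),
    fun k l m i j o hij hio => by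
      simpa only [e.injective.eq_iff] using h.atMostTwo _ _ _ i j o hij hio,
    fun v => ?_, fun x y => by rw [hcount, hcount]; exact h.edge_eq x y⟩⟩
  obtain ⟨b, i, rfl⟩ := h.covers v
  obtain ⟨k, rfl⟩ := e.surjective b
  exact ⟨k, i, rfl⟩

theorem adj_of_edgeCount_eq_zero (h : IsBlockDecomposition G emb) {x y : V}
    (hxy : 0 < edgeCount emb x y) (hyx : edgeCount emb y x = 0) : Adj G x y := by
  have := h.edge_eq x y
  unfold Adj
  omega

theorem eq_or_eq_of_emb_eq (h : IsBlockDecomposition G emb) {b c d : ι}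
    {i : Fin (shape b).numNodes} {j : Fin (shape c).numNodes} {k : Fin (shape d).numNodes}
    (hbc : b ≠ c) (hij : emb b i = emb c j) (hk : emb d k = emb b i) : d = b ∨ d = c := by
  rcases h.atMostTwo b c d i j k hij hk.symm with h' | h' | h'
  exacts [absurd h' hbc, Or.inl h'.symm, Or.inr h'.symm]

theorem adj_emb_of_unshared (h : IsBlockDecomposition G emb) {b : ι}
    {i j : Fin (shape b).numNodes} (he : (i, j) ∈ (shape b).edges)
    (hsh : ∀ c ≠ b, ∀ k l, emb c k = emb b i → emb c l = emb b j → False) :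
    Adj G (emb b i) (emb b j) := by
  refine h.adj_of_edgeCount_eq_zero (edgeCount_pos (mem_blockEdges.2 ⟨_, he, rfl, rfl⟩))
    (edgeCount_eq_zero fun c hc => ?_)
  obtain ⟨f, hf, hf₁, hf₂⟩ := mem_blockEdges.1 hc
  by_cases hcb : c = b
  · subst hcb
    have hf' : f = (j, i) := Prod.ext (h.emb_inj c hf₁) (h.emb_inj c hf₂)
    exact swap_notMem_edges he (hf' ▸ hf)
  · exact hsh c hcb f.2 f.1 hf₂ hf₁

/-- Edges at a dead end are never annihilated. -/
theorem reach_of_detour (h : IsBlockDecomposition G emb) {b : ι}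
    {i j k : Fin (shape b).numNodes} (hik : (i, k) ∈ (shape b).edges)
    (hkj : (k, j) ∈ (shape b).edges) (hk : ¬ (shape b).IsOutlet k) :
    Reach G (emb b i) (emb b j) := by
  have hunshared : ∀ c ≠ b, ∀ l, emb c l ≠ emb b k := fun c hcb l hl =>
    hk (h.glue_outlets c b l k hl hcb).2
  exact (h.adj_emb_of_unshared hik fun c hcb _ l _ hl => hunshared c hcb l hl).reach.trans
    (h.adj_emb_of_unshared hkj fun c hcb l _ hl _ => hunshared c hcb l hl).reach

theorem degree_eq_zero_of_perm [Fintype V] (h : IsBlockDecomposition G emb) {b c : ι}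
    {i : Fin (shape b).numNodes} {k : Fin (shape c).numNodes} (hbc : b ≠ c)
    (hx : emb b i = emb c k)
    (hperm : ((blockEdges emb c).map Prod.swap).Perm (blockEdges emb b)) :
    degree G (emb b i) = 0 := by
  set x := emb b i
  have hsplit (y z : V) (hyz : y = x ∨ z = x) :
      edgeCount emb y z = (blockEdges emb b).count (y, z) + (blockEdges emb c).count (y, z) := by
    refine Fintype.sum_eq_add b c hbc fun d ⟨hdb, hdc⟩ => List.count_eq_zero.2 fun hd => ?_
    obtain ⟨e, -, hy, hz⟩ := mem_blockEdges.1 hd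
    rcases hyz with rfl | rfl
    · exact (h.eq_or_eq_of_emb_eq hbc hx hy).elim hdb hdc
    · exact (h.eq_or_eq_of_emb_eq hbc hx hz).elim hdb hdc
  have hswap (y z : V) : (blockEdges emb c).count (y, z) = (blockEdges emb b).count (z, y) := by
    rw [← hperm.count_eq]
    exact (List.count_map_of_injective _ _ Prod.swap_injective (y, z)).symm
  have hbal (w : V) : edgeCount emb x w = edgeCount emb w x := by
    rw [hsplit x w (Or.inl rfl), hsplit w x (Or.inr rfl), hswap, hswap, add_comm]
  refine Finset.sum_eq_zero fun w _ => ?_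
  rw [h.edge_eq, h.edge_eq, hbal, Nat.sub_self, Nat.add_zero]

theorem degree_eq_zero_of_triangles [Fintype V] (h : IsBlockDecomposition G emb) {b c : ι}
    {i j z : Fin (shape b).numNodes} {i' j' z' : Fin (shape c).numNodes} (hbc : b ≠ c)
    (hb : (shape b).edges.Perm [(i, j), (j, z), (z, i)])
    (hc : (shape c).edges.Perm [(j', i'), (i', z'), (z', j')])
    (hx : emb c i' = emb b i) (hy : emb c j' = emb b j) (hz : emb c z' = emb b z) :
    degree G (emb b i) = 0 := by
  refine h.degree_eq_zero_of_perm hbc hx.symm ?_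
  have hb' := hb.map fun e => (emb b e.1, emb b e.2)
  have hc' := hc.map fun e => (emb c e.1, emb c e.2)
  simp only [List.map_cons, List.map_nil, hx, hy, hz] at hc'
  refine ((hc'.map Prod.swap).trans ?_).trans hb'.symm
  exact List.Perm.cons _ (List.Perm.swap _ _ _)

/-- The path through the third node of `b` survives, unless `c` is a triangle with the same
third node, in which case `emb b i` is isolated. -/
theorem reach_of_triangle [Fintype V] (h : IsBlockDecomposition G emb)
    (hiso : ∀ v, degree G v ≠ 0) {b c : ι} {i j : Fin (shape b).numNodes}
    {i' j' : Fin (shape c).numNodes} (hbc : b ≠ c) (he : (i, j) ∈ (shape b).edges)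
    (hf : (j', i') ∈ (shape c).edges) (hx : emb c i' = emb b i) (hy : emb c j' = emb b j)
    (hb : shape b = triangle) (hc : shape c = spike ∨ shape c = triangle) :
    Reach G (emb b i) (emb b j) := by
  obtain ⟨z, hzi, hzj, hperm, -⟩ := exists_third_of_eq_triangle hb he
  have hz_ne (m : Fin (shape c).numNodes) (hm : m = j' ∨ m = i') : emb c m ≠ emb b z := by
    rintro hmz
    rcases hm with rfl | rfl
    · exact hzj (h.emb_inj b (hmz.symm.trans hy))
    · exact hzi (h.emb_inj b (hmz.symm.trans hx))
  by_cases hshared : ∃ k, emb c k = emb b z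
  · exfalso
    obtain ⟨k, hk⟩ := hshared
    rcases hc with hc | hc
    · exact hz_ne k ((edges_of_eq_spike hc hf).2 k) hk
    obtain ⟨k', -, -, hperm', hnodes'⟩ := exists_third_of_eq_triangle hc hf
    rcases hnodes' k with hk' | hk' | rfl
    · exact hz_ne k (Or.inl hk') hk
    · exact hz_ne k (Or.inr hk') hk
    exact hiso _ (h.degree_eq_zero_of_triangles hbc hperm hperm' hx hy hk)
  push Not at hshared
  have hsole (d : ι) (hdb : d ≠ b) (m l) (hm : emb d m = emb b i ∨ emb d m = emb b j) :
      emb d l ≠ emb b z := by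
    obtain rfl : d = c := by
      rcases hm with hm | hm
      · exact (h.eq_or_eq_of_emb_eq hbc hx.symm hm).resolve_left hdb
      · exact (h.eq_or_eq_of_emb_eq hbc hy.symm hm).resolve_left hdb
    exact hshared l
  have hyz : Adj G (emb b j) (emb b z) := h.adj_emb_of_unshared (hperm.mem_iff.2 (by simp))
    fun d hd m l hm hl => hsole d hd m l (Or.inr hm) hl
  have hzx : Adj G (emb b z) (emb b i) := h.adj_emb_of_unshared (hperm.mem_iff.2 (by simp))
    fun d hd l m hl hm => hsole d hd m l (Or.inl hm) hl
  exact hzx.symm.reach.trans hyz.symm.reach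

theorem reach_of_mem_edges [Fintype V] (h : IsBlockDecomposition G emb)
    (hiso : ∀ v, degree G v ≠ 0) {b : ι} {i j : Fin (shape b).numNodes}
    (he : (i, j) ∈ (shape b).edges) : Reach G (emb b i) (emb b j) := by
  by_cases hrev : edgeCount emb (emb b j) (emb b i) = 0
  · exact (h.adj_of_edgeCount_eq_zero
      (edgeCount_pos (mem_blockEdges.2 ⟨_, he, rfl, rfl⟩)) hrev).reach
  obtain ⟨c, hyx⟩ := exists_mem_blockEdges_of_edgeCount_ne_zero hrev
  obtain ⟨⟨j', i'⟩, hf, hy, hx⟩ := mem_blockEdges.1 hyx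
  dsimp only at hf hx hy
  have hcb : c ≠ b := by
    rintro rfl
    rw [h.emb_inj c hx, h.emb_inj c hy] at hf
    exact swap_notMem_edges he hf
  obtain ⟨hi', hi⟩ := h.glue_outlets c b i' i hx hcb
  obtain ⟨hj', hj⟩ := h.glue_outlets c b j' j hy hcb
  obtain hc | ⟨k, hk, hjk, hki⟩ : (shape c = spike ∨ shape c = triangle) ∨ _ :=
    or_assoc.2 (eq_spike_or_eq_triangle_or_exists_detour hf hj' hi')
  swap
  · simpa only [hx, hy] using (h.reach_of_detour hjk hki hk).symm
  rcases eq_spike_or_eq_triangle_or_exists_detour he hi hj with hb | hb | ⟨k, hk, hik, hkj⟩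
  · rcases hc with hc | hc
    · refine (hiso _ (h.degree_eq_zero_of_perm hcb.symm hx.symm ?_)).elim
      rw [blockEdges, blockEdges, (edges_of_eq_spike hb he).1, (edges_of_eq_spike hc hf).1]
      simp [hx, hy]
    · simpa only [hx, hy] using
        (h.reach_of_triangle hiso hcb hf he hy.symm hx.symm hc (Or.inl hb)).symm
  · exact h.reach_of_triangle hiso hcb.symm he hf hx hy hb hc
  · exact h.reach_of_detour hik hkj hk

theorem reach_emb [Fintype V] (h : IsBlockDecomposition G emb) (hiso : ∀ v, degree G v ≠ 0)
    (b : ι) (i j : Fin (shape b).numNodes) : Reach G (emb b i) (emb b j) := by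
  obtain ⟨k, hk⟩ := (shape b).exists_common_neighbor i j
  have hreach (m) (hm : m ∈ [i, j]) : Reach G (emb b m) (emb b k) := by
    rcases hk m hm with rfl | hmk | hkm
    · exact Relation.ReflTransGen.refl
    · exact h.reach_of_mem_edges hiso hmk
    · exact (h.reach_of_mem_edges hiso hkm).symm
  exact (hreach i (by simp)).trans (hreach j (by simp)).symm

theorem decomposable_restrict [Fintype V] (h : IsBlockDecomposition G emb) (S : Finset V)
    (hS : ∀ b i j, emb b i ∈ S → emb b j ∈ S) :
    Decomposable (fun x y : {w : V // w ∈ S} => G x.1 y.1) := by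
  classical
  let P (b : ι) : Prop := ∀ i, emb b i ∈ S
  let emb' (b : {b // P b}) (i : Fin (shape b.1).numNodes) : {w // w ∈ S} :=
    ⟨emb b.1 i, b.2 i⟩
  have hcount (x y : {w // w ∈ S}) : edgeCount emb' x y = edgeCount emb x y :=
    calc edgeCount emb' x y = ∑ b : {b // P b}, (blockEdges emb b.1).count (x.1, y.1) :=
          Finset.sum_congr rfl fun b _ => (count_blockEdges_comp Subtype.val_injective b x y).symm
      _ = ∑ b ∈ Finset.univ.filter P, (blockEdges emb b).count (x.1, y.1) :=
          (Finset.sum_subtype _ (fun b => by simp only [Finset.mem_filter, Finset.mem_univ,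
            true_and]) fun b => (blockEdges emb b).count (x.1, y.1)).symm
      _ = edgeCount emb x y := by
          refine Finset.sum_filter_of_ne fun b _ hb i => ?_
          obtain ⟨e, -, hx, -⟩ :=
            mem_blockEdges.1 (List.count_pos_iff.1 (Nat.pos_of_ne_zero hb))
          exact hS b e.1 i (hx ▸ x.2)
  refine IsBlockDecomposition.decomposable (emb := emb') ⟨?_, ?_, ?_, ?_, ?_⟩
  · exact fun b i j hij => h.emb_inj b.1 (congrArg Subtype.val hij)
  · exact fun b c i j hij hbc =>
      h.glue_outlets b.1 c.1 i j (congrArg Subtype.val hij) (Subtype.coe_injective.ne hbc)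
  · intro b c d i j k hij hik
    simpa only [Subtype.ext_iff] using
      h.atMostTwo b.1 c.1 d.1 i j k (congrArg Subtype.val hij) (congrArg Subtype.val hik)
  · rintro ⟨v, hv⟩
    obtain ⟨b, i, rfl⟩ := h.covers v
    exact ⟨⟨b, fun j => hS b i j hv⟩, i, rfl⟩
  · intro x y
    rw [hcount, hcount]
    exact h.edge_eq x y

end IsBlockDecomposition

section Sigma

variable {V κ : Type} {ι : κ → Type} {S : κ → Finset V}
  {shape : ∀ q, ι q → BlockShape} {emb : ∀ q (b : ι q), Fin (shape q b).numNodes → {w // w ∈ S q}}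

theorem mem_of_mem_blockEdges_sigma {p : Σ q, ι q} {x y : V}
    (hp : (x, y) ∈ blockEdges (fun p i => (emb p.1 p.2 i : V)) p) : x ∈ S p.1 ∧ y ∈ S p.1 := by
  obtain ⟨e, -, rfl, rfl⟩ := mem_blockEdges.1 hp
  exact ⟨(emb _ _ e.1).2, (emb _ _ e.2).2⟩

variable [DecidableEq V] [Fintype κ] [∀ q, Fintype (ι q)]

theorem edgeCount_sigma (hdisj : ∀ q r v, v ∈ S q → v ∈ S r → q = r) (q : κ)
    (x y : {w // w ∈ S q}) :
    edgeCount (fun (p : Σ q, ι q) i => (emb p.1 p.2 i : V)) x y = edgeCount (emb q) x y := by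
  unfold edgeCount
  rw [Fintype.sum_sigma, Fintype.sum_eq_single q]
  · exact Finset.sum_congr rfl fun b _ => count_blockEdges_comp Subtype.val_injective b x y
  · refine fun r hr => Finset.sum_eq_zero fun c _ => List.count_eq_zero.2 fun hc => hr ?_
    exact hdisj _ _ _ (mem_of_mem_blockEdges_sigma hc).1 x.2

theorem IsBlockDecomposition.sigma {G : V → V → ℕ}
    (hdisj : ∀ q r v, v ∈ S q → v ∈ S r → q = r) (hcover : ∀ v, ∃ q, v ∈ S q)
    (hsep : ∀ q x y, x ∈ S q → y ∉ S q → G x y = 0)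
    (h : ∀ q, IsBlockDecomposition (fun x y : {w // w ∈ S q} => G x.1 y.1) (emb q)) :
    IsBlockDecomposition G (shape := fun p : Σ q, ι q => shape p.1 p.2)
      (fun p i => (emb p.1 p.2 i : V)) := by
  have hpart {q r : κ} {b : ι q} {c : ι r} (i j) (hij : (emb q b i : V) = emb r c j) : q = r :=
    hdisj _ _ _ (emb q b i).2 (hij ▸ (emb r c j).2)
  refine ⟨?_, ?_, ?_, ?_, ?_⟩
  · rintro ⟨q, b⟩ i j hij
    exact (h q).emb_inj b (Subtype.ext hij)
  · rintro ⟨q, b⟩ ⟨r, c⟩ i j hij hbc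
    obtain rfl := hpart i j hij
    exact (h q).glue_outlets b c i j (Subtype.ext hij) fun hbc' => hbc (hbc' ▸ rfl)
  · rintro ⟨q, b⟩ ⟨r, c⟩ ⟨t, d⟩ i j k hij hik
    obtain rfl := hpart i j hij
    obtain rfl := hpart i k hik
    simpa only [Sigma.mk.inj_iff, heq_eq_eq, true_and] using
      (h q).atMostTwo b c d i j k (Subtype.ext hij) (Subtype.ext hik)
  · intro v
    obtain ⟨q, hv⟩ := hcover v
    obtain ⟨b, i, hi⟩ := (h q).covers ⟨v, hv⟩
    exact ⟨⟨q, b⟩, i, congrArg Subtype.val hi⟩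
  · intro x y
    obtain ⟨q, hx⟩ := hcover x
    by_cases hy : y ∈ S q
    · rw [edgeCount_sigma hdisj q ⟨x, hx⟩ ⟨y, hy⟩, edgeCount_sigma hdisj q ⟨y, hy⟩ ⟨x, hx⟩]
      exact (h q).edge_eq ⟨x, hx⟩ ⟨y, hy⟩
    rw [hsep q x y hx hy,
      edgeCount_eq_zero fun p hp => hy (hdisj _ _ _ (mem_of_mem_blockEdges_sigma hp).1 hx ▸
        (mem_of_mem_blockEdges_sigma hp).2),
      edgeCount_eq_zero fun p hp => hy (hdisj _ _ _ (mem_of_mem_blockEdges_sigma hp).2 hx ▸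
        (mem_of_mem_blockEdges_sigma hp).1)]

end Sigma

theorem decomposable_of_partition {V κ : Type} [Fintype V] [DecidableEq V] [Fintype κ]
    {G : V → V → ℕ} (S : κ → Finset V) (hdisj : ∀ q r v, v ∈ S q → v ∈ S r → q = r)
    (hcover : ∀ v, ∃ q, v ∈ S q) (hsep : ∀ q x y, x ∈ S q → y ∉ S q → G x y = 0)
    (hS : ∀ q, Decomposable (fun x y : {w : V // w ∈ S q} => G x.1 y.1)) : Decomposable G :=
  (IsBlockDecomposition.sigma hdisj hcover hsep fun q =>
    (hS q).some.isBlockDecomposition).decomposable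

theorem stmt_0_general {V : Type} [Fintype V] [DecidableEq V] (G : V → V → ℕ)
    (hiso : ∀ v : V, degree G v ≠ 0) :
    Decomposable G ↔
      ∀ v : V, Decomposable (fun x y : {w : V // w ∈ component G v} => G x.1 y.1) := by
  constructor
  · rintro ⟨D⟩ v
    refine D.isBlockDecomposition.decomposable_restrict _ fun b i j hi => mem_component_iff.2 ?_
    exact (mem_component_iff.1 hi).trans (D.isBlockDecomposition.reach_emb hiso b i j)
  · intro h
    refine decomposable_of_partition (fun C : Finset.univ.image (component G) => (C : Finset V))
      ?_ (fun v => ⟨⟨_, Finset.mem_image_of_mem _ (Finset.mem_univ v)⟩,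
        mem_component_iff.2 Relation.ReflTransGen.refl⟩) ?_ ?_
    · rintro ⟨C, hC⟩ ⟨C', hC'⟩ v hv hv'
      obtain ⟨u, -, rfl⟩ := Finset.mem_image.1 hC
      obtain ⟨u', -, rfl⟩ := Finset.mem_image.1 hC'
      exact Subtype.ext ((component_eq_of_mem hv).symm.trans (component_eq_of_mem hv'))
    · rintro ⟨C, hC⟩ x y hx hy
      obtain ⟨u, -, rfl⟩ := Finset.mem_image.1 hC
      exact eq_zero_of_mem_component_of_notMem hx hy
    · rintro ⟨C, hC⟩
      obtain ⟨u, -, rfl⟩ := Finset.mem_image.1 hC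
      exact h u

/-- A finite directed graph without loops, 2-cycles or isolated nodes
is block-decomposable iff every connected component is block-decomposable. -/
theorem stmt_0 {V : Type} [Fintype V] [DecidableEq V] (G : V → V → ℕ)
    (hG : IsDiGraph G) (hiso : ∀ v : V, degree G v ≠ 0) :
    Decomposable G ↔
      ∀ v : V, Decomposable (fun x y : {w : V // w ∈ component G v} => G x.1 y.1) :=
  stmt_0_general G hiso
end

section
/- Suppose G is block-decomposable and in some block decomposition of G two edges between nodes x and y annihilate each other. Then either x and y lie in the same connected component of G, or both x and y are isolated nodes of G. -/
/-! The edges `x → y` and `y → x` come from distinct blocks `b` and `c`, so `x` and `y` are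
outlets glued between exactly these two blocks, and every edge of `G` at `x` or `y` comes from
`b` or `c`. An edge joining two outlets is a spike, a triangle edge or the mid-edge of a diamond,
and for each of them every third node `w` of the block sends as many edges into `{x, y}` as it
receives from it. After cancellation, the edges between `x` and `y` disappear, and `w` is adjacent
to `x` in `G` iff it is adjacent to `y`: either some `w` joins `x` to `y`, or both are isolated. -/

section Balanced

variable {V : Type}

def BalancedPair (m : V → V → ℕ) (x y : V) : Prop :=
  ∀ w, w ≠ x → w ≠ y → m w x + m w y = m x w + m y w

theorem BalancedPair.symm {m : V → V → ℕ} {x y : V} (h : BalancedPair m x y) :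
    BalancedPair m y x :=
  fun w hwy hwx => by have := h w hwx hwy; omega

theorem adj_iff_ne_of_eq_tsub {G m : V → V → ℕ} (hG : ∀ u v, G u v = m u v - m v u)
    {u v : V} : Adj G u v ↔ m u v ≠ m v u := by
  rw [Adj, hG, hG]; omega

theorem degree_eq_zero_iff [Fintype V] {G : V → V → ℕ} {v : V} :
    degree G v = 0 ↔ ∀ w, ¬Adj G v w := by
  simp [degree, Adj, Finset.sum_eq_zero_iff]

theorem reach_or_isolated_of_balancedPair [Fintype V] {G m : V → V → ℕ}
    (hG : ∀ u v, G u v = m u v - m v u) {x y : V} (hxy : m x y = m y x)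
    (hbal : BalancedPair m x y) : Reach G x y ∨ (degree G x = 0 ∧ degree G y = 0) := by
  simp only [degree_eq_zero_iff, adj_iff_ne_of_eq_tsub hG, not_not]
  by_cases hx : ∀ w, m x w = m w x
  · refine Or.inr ⟨hx, fun w => ?_⟩
    by_cases hwx : w = x
    · rw [hwx, hxy]
    by_cases hwy : w = y
    · rw [hwy]
    have := hbal w hwx hwy
    have := hx w
    omega
  · obtain ⟨w, hw⟩ := not_forall.1 hx
    have hwx : w ≠ x := by rintro rfl; exact hw rfl
    have hwy : w ≠ y := by rintro rfl; exact hw hxy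
    have := hbal w hwx hwy
    exact .inl <| .head ((adj_iff_ne_of_eq_tsub hG).2 hw)
      (.single ((adj_iff_ne_of_eq_tsub hG).2 (by omega)))

end Balanced

namespace BlockShape

instance instDecidablePredIsOutlet : (s : BlockShape) → DecidablePred s.IsOutlet
  | spike => fun _ => inferInstanceAs (Decidable True)
  | triangle => fun _ => inferInstanceAs (Decidable True)
  | infork => fun i => inferInstanceAs (Decidable ((i : ℕ) = 2))
  | outfork => fun i => inferInstanceAs (Decidable ((i : ℕ) = 2))
  | diamond => fun i => inferInstanceAs (Decidable ((i : ℕ) = 0 ∨ (i : ℕ) = 1))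
  | square => fun i => inferInstanceAs (Decidable ((i : ℕ) = 0))

theorem edges_nodup (s : BlockShape) : s.edges.Nodup := by
  cases s <;> decide

theorem swap_notMem_edges_s1 (s : BlockShape) : ∀ e ∈ s.edges, e.swap ∉ s.edges := by
  cases s <;> decide

/-- The edges joining two outlets are the spike, the triangle edges and the mid-edge of the
diamond. -/
theorem count_in_eq_count_out_of_isOutlet (s : BlockShape) :
    ∀ e ∈ s.edges, s.IsOutlet e.1 → s.IsOutlet e.2 → ∀ k, k ≠ e.1 → k ≠ e.2 →
      s.edges.count (k, e.1) + s.edges.count (k, e.2) =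
        s.edges.count (e.1, k) + s.edges.count (e.2, k) := by
  cases s <;> decide

variable {V : Type} [DecidableEq V]

def mult (s : BlockShape) (φ : Fin s.numNodes → V) (u v : V) : ℕ :=
  s.edges.countP fun e => decide (φ e.1 = u ∧ φ e.2 = v)

theorem mult_apply_apply (s : BlockShape) {φ : Fin s.numNodes → V} (hφ : Function.Injective φ)
    (i j : Fin s.numNodes) : s.mult φ (φ i) (φ j) = s.edges.count (i, j) := by
  rw [mult, List.count_eq_countP]
  refine List.countP_congr fun e _ => ?_
  simp [hφ.eq_iff, Prod.ext_iff]

theorem mult_eq_zero_of_notMem_range (s : BlockShape) {φ : Fin s.numNodes → V} {u v : V}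
    (h : u ∉ Set.range φ ∨ v ∉ Set.range φ) : s.mult φ u v = 0 := by
  refine List.countP_eq_zero.2 fun e _ he => ?_
  obtain ⟨rfl, rfl⟩ := of_decide_eq_true he
  exact h.elim (· ⟨e.1, rfl⟩) (· ⟨e.2, rfl⟩)

theorem exists_mem_edges_of_mult_pos (s : BlockShape) {φ : Fin s.numNodes → V} {u v : V}
    (h : 0 < s.mult φ u v) : ∃ e ∈ s.edges, φ e.1 = u ∧ φ e.2 = v := by
  obtain ⟨e, he, hφe⟩ := List.countP_pos_iff.1 h
  exact ⟨e, he, of_decide_eq_true hφe⟩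

end BlockShape

namespace BlockShape

variable (s : BlockShape) {V : Type} [DecidableEq V] {φ : Fin s.numNodes → V}
  {e : Fin s.numNodes × Fin s.numNodes}

theorem mult_edge_eq_one (s : BlockShape) {φ : Fin s.numNodes → V} (hφ : Function.Injective φ)
    {e : Fin s.numNodes × Fin s.numNodes} (he : e ∈ s.edges) :
    s.mult φ (φ e.1) (φ e.2) = 1 := by
  rw [s.mult_apply_apply hφ]
  exact List.count_eq_one_of_mem s.edges_nodup he

theorem mult_edge_swap_eq_zero (s : BlockShape) {φ : Fin s.numNodes → V}
    (hφ : Function.Injective φ) {e : Fin s.numNodes × Fin s.numNodes} (he : e ∈ s.edges) :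
    s.mult φ (φ e.2) (φ e.1) = 0 := by
  rw [s.mult_apply_apply hφ]
  exact List.count_eq_zero.2 (s.swap_notMem_edges_s1 e he)

theorem balancedPair_mult (s : BlockShape) {φ : Fin s.numNodes → V} (hφ : Function.Injective φ)
    {e : Fin s.numNodes × Fin s.numNodes} (he : e ∈ s.edges) (h₁ : s.IsOutlet e.1)
    (h₂ : s.IsOutlet e.2) :
    BalancedPair (s.mult φ) (φ e.1) (φ e.2) := by
  intro w hw₁ hw₂
  by_cases hw : w ∈ Set.range φ
  · obtain ⟨k, rfl⟩ := hw
    simp only [s.mult_apply_apply hφ]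
    exact s.count_in_eq_count_out_of_isOutlet e he h₁ h₂ k (ne_of_apply_ne φ hw₁)
      (ne_of_apply_ne φ hw₂)
  · simp only [s.mult_eq_zero_of_notMem_range (.inl hw),
      s.mult_eq_zero_of_notMem_range (.inr hw)]

end BlockShape

namespace BlockDecomposition

variable {V : Type} [Fintype V] [DecidableEq V] {G : V → V → ℕ} (D : BlockDecomposition G)

def blockMultOf (b : Fin D.n) : V → V → ℕ := (D.shape b).mult (D.emb b)

theorem exists_edge_of_mult_pos {u v : V} (h : 0 < D.mult u v) :
    ∃ b, ∃ e ∈ (D.shape b).edges, D.emb b e.1 = u ∧ D.emb b e.2 = v := by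
  obtain ⟨b, -, hb⟩ := Finset.exists_ne_zero_of_sum_ne_zero (s := .univ)
    (f := fun b => D.blockMultOf b u v) h.ne'
  exact ⟨b, (D.shape b).exists_mem_edges_of_mult_pos (Nat.pos_of_ne_zero hb)⟩

theorem ne_of_edge_reverse {b c : Fin D.n}
    {e : Fin (D.shape b).numNodes × Fin (D.shape b).numNodes}
    {f : Fin (D.shape c).numNodes × Fin (D.shape c).numNodes} (he : e ∈ (D.shape b).edges)
    (hf : f ∈ (D.shape c).edges) (h₁ : D.emb c f.1 = D.emb b e.2)
    (h₂ : D.emb c f.2 = D.emb b e.1) : b ≠ c := by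
  rintro rfl
  have : f = e.swap := Prod.ext (D.emb_inj b h₁) (D.emb_inj b h₂)
  exact (D.shape b).swap_notMem_edges_s1 e he (this ▸ hf)

theorem notMem_range_of_emb_eq {b c d : Fin D.n} {i : Fin (D.shape b).numNodes}
    {j : Fin (D.shape c).numNodes} (h : D.emb b i = D.emb c j) (hbc : b ≠ c) (hdb : d ≠ b)
    (hdc : d ≠ c) : D.emb b i ∉ Set.range (D.emb d) := by
  rintro ⟨k, hk⟩
  rcases D.atMostTwo b c d i j k h hk.symm with h | h | h
  exacts [hbc h, hdb h.symm, hdc h.symm]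

theorem mult_eq_add_of_forall_notMem_range {b c : Fin D.n} (hbc : b ≠ c) {u : V}
    (hu : ∀ d, d ≠ b → d ≠ c → u ∉ Set.range (D.emb d)) (v : V) :
    D.mult u v = D.blockMultOf b u v + D.blockMultOf c u v ∧
      D.mult v u = D.blockMultOf b v u + D.blockMultOf c v u :=
  ⟨Finset.sum_eq_add_of_mem b c (Finset.mem_univ _) (Finset.mem_univ _) hbc fun d _ hd =>
      BlockShape.mult_eq_zero_of_notMem_range _ (.inl (hu d hd.1 hd.2)),
    Finset.sum_eq_add_of_mem b c (Finset.mem_univ _) (Finset.mem_univ _) hbc fun d _ hd =>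
      BlockShape.mult_eq_zero_of_notMem_range _ (.inr (hu d hd.1 hd.2))⟩

theorem mult_comm_and_balancedPair_of_mult_pos {x y : V} (hxy : 0 < D.mult x y)
    (hyx : 0 < D.mult y x) :
    D.mult x y = D.mult y x ∧ BalancedPair D.mult x y := by
  obtain ⟨b, e, he, rfl, rfl⟩ := D.exists_edge_of_mult_pos hxy
  obtain ⟨c, f, hf, hf₁, hf₂⟩ := D.exists_edge_of_mult_pos hyx
  have hbc := D.ne_of_edge_reverse he hf hf₁ hf₂
  obtain ⟨he₁, hf₂'⟩ := D.glue_outlets b c e.1 f.2 hf₂.symm hbc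
  obtain ⟨he₂, hf₁'⟩ := D.glue_outlets b c e.2 f.1 hf₁.symm hbc
  have hx := D.mult_eq_add_of_forall_notMem_range hbc fun _ =>
    D.notMem_range_of_emb_eq hf₂.symm hbc
  have hy := D.mult_eq_add_of_forall_notMem_range hbc fun _ =>
    D.notMem_range_of_emb_eq hf₁.symm hbc
  have hb₁ := (D.shape b).mult_edge_eq_one (D.emb_inj b) he
  have hb₀ := (D.shape b).mult_edge_swap_eq_zero (D.emb_inj b) he
  have hc₁ := (D.shape c).mult_edge_eq_one (D.emb_inj c) hf
  have hc₀ := (D.shape c).mult_edge_swap_eq_zero (D.emb_inj c) hf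
  have hbal_b := (D.shape b).balancedPair_mult (D.emb_inj b) he he₁ he₂
  have hbal_c := ((D.shape c).balancedPair_mult (D.emb_inj c) hf hf₁' hf₂').symm
  rw [hf₁, hf₂] at hc₁ hc₀ hbal_c
  refine ⟨?_, fun w hw₁ hw₂ => ?_⟩
  · rw [(hx _).1, (hx _).2]
    unfold blockMultOf
    omega
  · have := hbal_b w hw₁ hw₂
    have := hbal_c w hw₁ hw₂
    rw [(hx w).1, (hx w).2, (hy w).1, (hy w).2]
    unfold blockMultOf
    omega

end BlockDecomposition

theorem stmt_1_general {V : Type} [Fintype V] [DecidableEq V] (G : V → V → ℕ)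
    (D : BlockDecomposition G) (x y : V)
    (hxy : 0 < D.mult x y) (hyx : 0 < D.mult y x) :
    Reach G x y ∨ (degree G x = 0 ∧ degree G y = 0) := by
  obtain ⟨hcomm, hbal⟩ := D.mult_comm_and_balancedPair_of_mult_pos hxy hyx
  exact reach_or_isolated_of_balancedPair D.edge_eq hcomm hbal

/-- if in some block decomposition of `G` two edges between `x` and `y`
annihilate each other, then either `x` and `y` lie in the same connected component of `G`,
or both are isolated nodes. -/
theorem stmt_1 {V : Type} [Fintype V] [DecidableEq V] (G : V → V → ℕ)
    (hG : IsDiGraph G) (D : BlockDecomposition G) (x y : V)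
    (hxy : 0 < D.mult x y) (hyx : 0 < D.mult y x) :
    Reach G x y ∨ (degree G x = 0 ∧ degree G y = 0) :=
  stmt_1_general G D x y hxy hyx
end

section
/- If G is a connected block-decomposable graph containing a node o of degree 8, then G is isomorphic to the graph obtained by gluing two square blocks at their centers; in particular G has exactly 9 nodes (the common center o of degree 8 and two disjoint 4-cycles of corners, each corner of degree 3, attached to o as in a square block). -/
/-- The graph obtained by gluing two square blocks at their centers: the common
center is `0`, the corners of the first square are `1,2,3,4` and those of the second
are `5,6,7,8`. -/
def doubleSquare : Fin 9 → Fin 9 → ℕ := fun x y =>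
  ([(1, 2), (2, 3), (3, 4), (4, 1), (0, 1), (2, 0), (0, 3), (4, 0),
    (5, 6), (6, 7), (7, 8), (8, 5), (0, 5), (6, 0), (0, 7), (8, 0)] :
      List (Fin 9 × Fin 9)).countP fun e => decide (e = (x, y))

/-!
A node lies in at most two blocks, and inside a block it has degree at most 4, with equality
only at the center of a square. Since annihilation only lowers degrees, a node of degree 8 is
the center of exactly two square blocks `b`, `c` and lies in no other block. Every other
outlet of a square is its center, so no further block can be attached to `b` or `c`;
connectedness then forces the decomposition to consist of `b` and `c` alone, which meet only
at their centers. No edge of one square is parallel to an edge of the other, so nothing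
annihilates and `G` is the double square.
-/

namespace BlockShape

lemma numNodes_pos : ∀ s : BlockShape, 0 < s.numNodes := by
  intro s; cases s <;> decide

def castSquare {s : BlockShape} (h : s = square) : Fin 5 ≃ Fin s.numNodes :=
  finCongr (congrArg numNodes h).symm

lemma blockDeg_eq_add : ∀ (s : BlockShape) (i : Fin s.numNodes),
    s.blockDeg i = s.edges.countP (fun e => e.1 = i) + s.edges.countP (fun e => e.2 = i) := by
  intro s; cases s <;> decide

lemma blockDeg_pos : ∀ (s : BlockShape) (i : Fin s.numNodes), 0 < s.blockDeg i := by
  intro s; cases s <;> decide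

lemma blockDeg_le_four : ∀ (s : BlockShape) (i : Fin s.numNodes), s.blockDeg i ≤ 4 := by
  intro s; cases s <;> decide

lemma exists_castSquare_zero_eq_of_blockDeg_eq_four : ∀ (s : BlockShape) (i : Fin s.numNodes),
    s.blockDeg i = 4 → ∃ h : s = square, castSquare h 0 = i := by
  intro s; cases s <;> decide

lemma isOutlet_castSquare_iff {s : BlockShape} (h : s = square) (k : Fin 5) :
    s.IsOutlet (castSquare h k) ↔ k = 0 := by
  subst h
  exact (Fin.ext_iff (a := k) (b := 0)).symm

lemma countP_edges_castSquare {s : BlockShape} (h : s = square)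
    (p : Fin s.numNodes → Fin s.numNodes → Bool) :
    s.edges.countP (fun e => p e.1 e.2) =
      square.edges.countP (fun e => p (castSquare h e.1) (castSquare h e.2)) := by
  subst h; rfl

end BlockShape

lemma List.sum_countP_and_eq_countP {α W : Type} [Fintype W] [DecidableEq W] (l : List α)
    (p : α → Prop) [DecidablePred p] (f : α → W) :
    ∑ w, l.countP (fun a => decide (p a ∧ f a = w)) = l.countP (fun a => decide (p a)) := by
  induction l with
  | nil => simp
  | cons a t ih =>
    simp only [List.countP_cons, Finset.sum_add_distrib, ih]
    by_cases h : p a <;> simp [h]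

def squareMult {V : Type} [DecidableEq V] (g : Fin 5 → V) (x y : V) : ℕ :=
  BlockShape.square.edges.countP fun e => decide (g e.1 = x ∧ g e.2 = y)

lemma squareMult_comp {W V : Type} [DecidableEq W] [DecidableEq V] {f : W → V}
    (hf : Function.Injective f) (g : Fin 5 → W) (x y : W) :
    squareMult (f ∘ g) (f x) (f y) = squareMult g x y := by
  unfold squareMult
  exact List.countP_congr fun e _ =>
    decide_eq_true_iff.trans ((and_congr hf.eq_iff hf.eq_iff).trans decide_eq_true_iff.symm)

def doubleSquareLeft : Fin 5 → Fin 9 := Fin.castAdd 4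

def doubleSquareRight : Fin 5 → Fin 9 := Fin.cons (0 : Fin 9) (Fin.natAdd 5 : Fin 4 → Fin 9)

lemma doubleSquare_eq (p q : Fin 9) :
    doubleSquare p q =
      squareMult doubleSquareLeft p q + squareMult doubleSquareRight p q -
        (squareMult doubleSquareLeft q p + squareMult doubleSquareRight q p) := by
  revert p q; decide

lemma exists_equiv_doubleSquare {V : Type} [DecidableEq V] (G : V → V → ℕ)
    (g₁ g₂ : Fin 5 → V) (hg₁ : Function.Injective g₁) (hg₂ : Function.Injective g₂)
    (hg₁₂ : ∀ i j, g₁ i = g₂ j ↔ i = 0 ∧ j = 0)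
    (hcov : ∀ v, (∃ k, g₁ k = v) ∨ ∃ k, g₂ k = v)
    (hG : ∀ x y, G x y = squareMult g₁ x y + squareMult g₂ x y -
      (squareMult g₁ y x + squareMult g₂ y x)) :
    ∃ e : V ≃ Fin 9, e (g₁ 0) = 0 ∧ ∀ x y, G x y = doubleSquare (e x) (e y) := by
  set f : Fin 9 → V := Fin.append g₁ (g₂ ∘ Fin.succ)
  have hf₁ : g₁ = f ∘ doubleSquareLeft := funext fun k => (Fin.append_left _ _ k).symm
  have hf₂ : g₂ = f ∘ doubleSquareRight := by
    funext k
    refine Fin.cases ?_ (fun j => ?_) k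
    · exact ((hg₁₂ 0 0).2 ⟨rfl, rfl⟩).symm.trans (Fin.append_left _ _ 0).symm
    · exact (Fin.append_right g₁ (g₂ ∘ Fin.succ) j).symm
  have hinj : Function.Injective f := Fin.append_injective_iff.2
    ⟨hg₁, hg₂.comp (Fin.succ_injective _), fun i j h => Fin.succ_ne_zero j ((hg₁₂ i _).1 h).2⟩
  have hsurj : Function.Surjective f := by
    intro v
    rcases hcov v with ⟨k, rfl⟩ | ⟨k, rfl⟩
    · exact ⟨_, (congrFun hf₁ k).symm⟩
    · exact ⟨_, (congrFun hf₂ k).symm⟩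
  have hbij : Function.Bijective f := ⟨hinj, hsurj⟩
  refine ⟨(Equiv.ofBijective f hbij).symm,
    (Equiv.ofBijective f _).symm_apply_eq.2 (congrFun hf₁ 0), fun x y => ?_⟩
  obtain ⟨p, rfl⟩ := hsurj x
  obtain ⟨q, rfl⟩ := hsurj y
  rw [Equiv.ofBijective_symm_apply_apply, Equiv.ofBijective_symm_apply_apply, hG, hf₁, hf₂]
  simp only [squareMult_comp hinj]
  exact (doubleSquare_eq p q).symm

namespace BlockDecomposition

variable {V : Type} [Fintype V] [DecidableEq V] {G : V → V → ℕ} (D : BlockDecomposition G)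

lemma le_mult (x y : V) : G x y ≤ D.mult x y :=
  (D.edge_eq x y).trans_le (Nat.sub_le _ _)

lemma exists_block_of_mult_pos {x y : V} (h : 0 < D.mult x y) :
    ∃ d i j, D.emb d i = x ∧ D.emb d j = y := by
  rw [mult, blockMult] at h
  obtain ⟨d, -, hd⟩ := Finset.exists_ne_zero_of_sum_ne_zero h.ne'
  obtain ⟨e, -, he⟩ := List.countP_pos_iff.1 (Nat.pos_of_ne_zero hd)
  exact ⟨d, e.1, e.2, of_decide_eq_true he⟩

lemma exists_block_of_adj {x y : V} (h : Adj G x y) :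
    ∃ d i j, D.emb d i = x ∧ D.emb d j = y := by
  rcases Nat.add_pos_iff_pos_or_pos.1 (h.trans_le (add_le_add (D.le_mult x y) (D.le_mult y x)))
    with hxy | hyx
  · exact D.exists_block_of_mult_pos hxy
  · obtain ⟨d, i, j, hi, hj⟩ := D.exists_block_of_mult_pos hyx
    exact ⟨d, j, i, hj, hi⟩

def incidence (d : Fin D.n) (v : V) : ℕ :=
  (D.shape d).edges.countP (fun e => D.emb d e.1 = v) +
    (D.shape d).edges.countP (fun e => D.emb d e.2 = v)

lemma sum_mult_add_mult_eq_sum_incidence (v : V) :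
    ∑ w, (D.mult v w + D.mult w v) = ∑ d, D.incidence d v := by
  simp only [mult, blockMult, ← Finset.sum_add_distrib]
  rw [Finset.sum_comm]
  refine Finset.sum_congr rfl fun d _ => ?_
  simp only [Finset.sum_add_distrib, incidence, List.sum_countP_and_eq_countP]
  simp only [and_comm (b := D.emb d _ = v), List.sum_countP_and_eq_countP]

lemma degree_le_sum_incidence (v : V) : degree G v ≤ ∑ d, D.incidence d v :=
  (D.sum_mult_add_mult_eq_sum_incidence v) ▸
    Finset.sum_le_sum fun w _ => add_le_add (D.le_mult v w) (D.le_mult w v)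

lemma incidence_eq_blockDeg {d : Fin D.n} {i : Fin (D.shape d).numNodes} {v : V}
    (h : D.emb d i = v) : D.incidence d v = (D.shape d).blockDeg i := by
  subst h
  simp only [incidence, BlockShape.blockDeg_eq_add, (D.emb_inj d).eq_iff]

lemma incidence_pos_iff {d : Fin D.n} {v : V} : 0 < D.incidence d v ↔ ∃ i, D.emb d i = v := by
  refine ⟨fun h => ?_, fun ⟨i, hi⟩ => D.incidence_eq_blockDeg hi ▸ BlockShape.blockDeg_pos _ i⟩
  rcases Nat.add_pos_iff_pos_or_pos.1 h with h | h <;>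
    obtain ⟨e, -, he⟩ := List.countP_pos_iff.1 h
  exacts [⟨e.1, of_decide_eq_true he⟩, ⟨e.2, of_decide_eq_true he⟩]

lemma incidence_le_four (d : Fin D.n) (v : V) : D.incidence d v ≤ 4 := by
  by_cases h : ∃ i, D.emb d i = v
  · obtain ⟨i, hi⟩ := h
    exact D.incidence_eq_blockDeg hi ▸ BlockShape.blockDeg_le_four _ i
  · exact (Nat.eq_zero_of_not_pos (mt D.incidence_pos_iff.1 h)).trans_le (by norm_num)

def squareEmb (d : Fin D.n) (h : D.shape d = .square) : Fin 5 → V :=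
  D.emb d ∘ BlockShape.castSquare h

section Square

variable {D} {b : Fin D.n} (hb : D.shape b = .square)

lemma squareEmb_injective : Function.Injective (D.squareEmb b hb) :=
  (D.emb_inj b).comp (BlockShape.castSquare hb).injective

lemma exists_squareEmb_eq (i : Fin (D.shape b).numNodes) : ∃ k, D.squareEmb b hb k = D.emb b i :=
  ⟨(BlockShape.castSquare hb).symm i, by simp [squareEmb]⟩

lemma emb_eq_squareEmb_zero_of_isOutlet {i : Fin (D.shape b).numNodes}
    (hi : (D.shape b).IsOutlet i) : D.emb b i = D.squareEmb b hb 0 := by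
  obtain ⟨k, rfl⟩ := (BlockShape.castSquare hb).surjective i
  rw [(BlockShape.isOutlet_castSquare_iff hb k).1 hi]
  rfl

lemma eq_zero_of_emb_eq_squareEmb {d : Fin D.n} (hdb : d ≠ b) {i : Fin (D.shape d).numNodes}
    {k : Fin 5} (h : D.emb d i = D.squareEmb b hb k) : k = 0 :=
  (BlockShape.isOutlet_castSquare_iff hb k).1 (D.glue_outlets d b i _ h hdb).2

end Square

lemma exists_squareEmb_zero_eq_of_incidence_eq_four {d : Fin D.n} {v : V}
    (h : D.incidence d v = 4) : ∃ hd, D.squareEmb d hd 0 = v := by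
  obtain ⟨i, rfl⟩ : ∃ i, D.emb d i = v := D.incidence_pos_iff.1 (by omega)
  obtain ⟨hd, hi⟩ := BlockShape.exists_castSquare_zero_eq_of_blockDeg_eq_four _ i
    ((D.incidence_eq_blockDeg rfl).symm.trans h)
  exact ⟨hd, congrArg (D.emb d) hi⟩

lemma card_blocks_containing_le_two (v : V) :
    (Finset.univ.filter fun d => ∃ i, D.emb d i = v).card ≤ 2 := by
  by_contra! h
  obtain ⟨a, ha, b, hb, c, hc, hab, hac, hbc⟩ := Finset.two_lt_card.1 h
  obtain ⟨i, hi⟩ := (Finset.mem_filter.1 ha).2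
  obtain ⟨j, hj⟩ := (Finset.mem_filter.1 hb).2
  obtain ⟨k, hk⟩ := (Finset.mem_filter.1 hc).2
  rcases D.atMostTwo a b c i j k (hi.trans hj.symm) (hi.trans hk.symm) with h | h | h
  exacts [hab h, hac h, hbc h]

lemma exists_squares_of_degree_eq_eight {v : V} (hv : degree G v = 8) :
    ∃ b c, b ≠ c ∧ (∃ hb, D.squareEmb b hb 0 = v) ∧ (∃ hc, D.squareEmb c hc 0 = v) ∧
      ∀ d i, D.emb d i = v → d = b ∨ d = c := by
  set T := Finset.univ.filter fun d => ∃ i, D.emb d i = v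
  have hsum : ∑ d ∈ T, D.incidence d v = ∑ d, D.incidence d v :=
    Finset.sum_filter_of_ne fun d _ h => D.incidence_pos_iff.1 (Nat.pos_of_ne_zero h)
  have hle : ∑ d ∈ T, D.incidence d v ≤ T.card * 4 :=
    Finset.sum_le_card_nsmul _ _ _ fun d _ => D.incidence_le_four d v
  have h8 := D.degree_le_sum_incidence v
  have hT2 : T.card ≤ 2 := D.card_blocks_containing_le_two v
  have hT : T.card = 2 := by omega
  obtain ⟨b, c, hbc, hTbc⟩ := Finset.card_eq_two.1 hT
  rw [← hsum, hTbc, Finset.sum_pair hbc] at h8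
  have hb := D.incidence_le_four b v
  have hc := D.incidence_le_four c v
  refine ⟨b, c, hbc, D.exists_squareEmb_zero_eq_of_incidence_eq_four (by omega),
    D.exists_squareEmb_zero_eq_of_incidence_eq_four (by omega), fun d i hi => ?_⟩
  have hd : d ∈ T := Finset.mem_filter.2 ⟨Finset.mem_univ d, i, hi⟩
  simpa [hTbc] using hd

lemma forall_blocks_of_reach (B : Fin D.n → Prop) {o v : V}
    (hout : ∀ d, B d → ∀ i, (D.shape d).IsOutlet i → D.emb d i = o)
    (ho : ∀ d i, D.emb d i = o → B d) (hv : Reach G o v) : ∀ d i, D.emb d i = v → B d := by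
  induction hv with
  | refl => exact ho
  | tail _ hadj ih =>
    intro d k hk
    obtain ⟨d₀, i, j, hi, hj⟩ := D.exists_block_of_adj hadj
    by_cases hd : d₀ = d
    · exact hd ▸ ih d₀ i hi
    · refine ho d k (hk.trans (hj.symm.trans (hout d₀ (ih d₀ i hi) j ?_)))
      exact (D.glue_outlets d₀ d j k (hj.trans hk.symm) hd).1

lemma mult_eq_squareMult_add {b c : Fin D.n} (hbc : b ≠ c) (hall : ∀ d, d = b ∨ d = c)
    (hb : D.shape b = .square) (hc : D.shape c = .square) (x y : V) :
    D.mult x y = squareMult (D.squareEmb b hb) x y + squareMult (D.squareEmb c hc) x y := by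
  have huniv : (Finset.univ : Finset (Fin D.n)) = {b, c} := by
    ext d; simpa using hall d
  rw [mult, blockMult, huniv, Finset.sum_pair hbc,
    BlockShape.countP_edges_castSquare hb (fun i j => decide (D.emb b i = x ∧ D.emb b j = y)),
    BlockShape.countP_edges_castSquare hc (fun i j => decide (D.emb c i = x ∧ D.emb c j = y))]
  rfl

lemma exists_equiv_doubleSquare_of_squares {b c : Fin D.n} (hbc : b ≠ c)
    (hall : ∀ d, d = b ∨ d = c) (hb : D.shape b = .square) (hc : D.shape c = .square)
    (hbc₀ : D.squareEmb b hb 0 = D.squareEmb c hc 0) :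
    ∃ e : V ≃ Fin 9, e (D.squareEmb b hb 0) = 0 ∧ ∀ x y, G x y = doubleSquare (e x) (e y) := by
  refine exists_equiv_doubleSquare G _ _ (squareEmb_injective hb) (squareEmb_injective hc)
    (fun i j => ⟨fun h => ⟨?_, ?_⟩, fun ⟨hi, hj⟩ => hi ▸ hj ▸ hbc₀⟩) (fun v => ?_) fun x y => ?_
  · exact eq_zero_of_emb_eq_squareEmb hb hbc.symm h.symm
  · exact eq_zero_of_emb_eq_squareEmb hc hbc h
  · obtain ⟨d, i, rfl⟩ := D.covers v
    rcases hall d with rfl | rfl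
    exacts [Or.inl (exists_squareEmb_eq hb i), Or.inr (exists_squareEmb_eq hc i)]
  · rw [D.edge_eq]
    exact congrArg₂ _ (D.mult_eq_squareMult_add hbc hall hb hc x y)
      (D.mult_eq_squareMult_add hbc hall hb hc y x)

lemma eq_or_eq_of_connected (hconn : ∀ x y : V, Reach G x y) {b c : Fin D.n}
    (hb : D.shape b = .square) (hc : D.shape c = .square) {o : V} (hbo : D.squareEmb b hb 0 = o)
    (hco : D.squareEmb c hc 0 = o) (ho : ∀ d i, D.emb d i = o → d = b ∨ d = c) (d : Fin D.n) :
    d = b ∨ d = c := by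
  refine D.forall_blocks_of_reach (fun d => d = b ∨ d = c) ?_ ho
    (hconn o (D.emb d ⟨0, BlockShape.numNodes_pos _⟩)) d _ rfl
  rintro d (rfl | rfl) i hi
  exacts [(emb_eq_squareEmb_zero_of_isOutlet hb hi).trans hbo,
    (emb_eq_squareEmb_zero_of_isOutlet hc hi).trans hco]

end BlockDecomposition

theorem stmt_5_general {V : Type} [Fintype V] [DecidableEq V] (G : V → V → ℕ)
    (hconn : ∀ x y : V, Reach G x y)
    (hdec : Decomposable G) (o : V) (ho : degree G o = 8) :
    ∃ e : V ≃ Fin 9, e o = 0 ∧ ∀ x y : V, G x y = doubleSquare (e x) (e y) := by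
  obtain ⟨D⟩ := hdec
  obtain ⟨b, c, hbc, ⟨hb, rfl⟩, ⟨hc, hco⟩, ho⟩ := D.exists_squares_of_degree_eq_eight ho
  exact D.exists_equiv_doubleSquare_of_squares hbc (D.eq_or_eq_of_connected hconn hb hc rfl hco ho)
    hb hc hco.symm

/-- a connected block-decomposable graph with a node of degree 8 is
isomorphic to two square blocks glued at their centers (9 nodes). -/
theorem stmt_5 {V : Type} [Fintype V] [DecidableEq V] (G : V → V → ℕ)
    (hG : IsDiGraph G) (hconn : ∀ x y : V, Reach G x y)
    (hdec : Decomposable G) (o : V) (ho : degree G o = 8) :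
    ∃ e : V ≃ Fin 9, e o = 0 ∧ ∀ x y : V, G x y = doubleSquare (e x) (e y) :=
  stmt_5_general G hconn hdec o ho
end

section
/- If G is block-decomposable and o is a node of G of degree 7, then in every block decomposition of G the node o belongs to exactly two blocks, one of which is a square block with o as its center and the other a diamond block with o as one of its outlets. -/
section Aux

instance : Fintype BlockShape :=
  ⟨⟨{.spike, .triangle, .infork, .outfork, .diamond, .square}, by decide⟩,
    by intro x; cases x <;> decide⟩

instance : ∀ (s : BlockShape) (i : Fin s.numNodes), Decidable (s.IsOutlet i)
  | .spike, _ => .isTrue trivial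
  | .triangle, _ => .isTrue trivial
  | .infork, i => inferInstanceAs (Decidable ((i : ℕ) = 2))
  | .outfork, i => inferInstanceAs (Decidable ((i : ℕ) = 2))
  | .diamond, i => inferInstanceAs (Decidable ((i : ℕ) = 0 ∨ (i : ℕ) = 1))
  | .square, i => inferInstanceAs (Decidable ((i : ℕ) = 0))

lemma aux_blockDeg_le : ∀ (s : BlockShape) (i : Fin s.numNodes), s.blockDeg i ≤ 4 := by
  decide

lemma aux_countsplit : ∀ (s : BlockShape) (i : Fin s.numNodes),
    ((s.edges.countP fun e => decide (e.1 = i)) + (s.edges.countP fun e => decide (e.2 = i)))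
      = s.blockDeg i := by decide

lemma aux_key : ∀ (s : BlockShape) (i : Fin s.numNodes) (s' : BlockShape)
    (j : Fin s'.numNodes), s.IsOutlet i → s'.IsOutlet j →
    s.blockDeg i + s'.blockDeg j = 7 →
    (s = .square ∧ (i : ℕ) = 0 ∧ s' = .diamond ∧ ((j : ℕ) = 0 ∨ (j : ℕ) = 1)) ∨
    (s' = .square ∧ (j : ℕ) = 0 ∧ s = .diamond ∧ ((i : ℕ) = 0 ∨ (i : ℕ) = 1)) := by
  intro s i s'
  revert i
  cases s <;> cases s' <;> decide

lemma aux_sum_countP_left {α W : Type} [Fintype W] [DecidableEq W] (l : List α)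
    (p q : α → W) (o : W) :
    ∑ w : W, l.countP (fun e => decide (p e = o ∧ q e = w))
      = l.countP fun e => decide (p e = o) := by
  induction l with
  | nil => simp
  | cons a t ih =>
    simp only [List.countP_cons, decide_eq_true_eq]
    rw [Finset.sum_add_distrib, ih]
    congr 1
    by_cases h : p a = o
    · simp [h]
    · simp [h]

lemma aux_sum_countP_right {α W : Type} [Fintype W] [DecidableEq W] (l : List α)
    (p q : α → W) (o : W) :
    ∑ w : W, l.countP (fun e => decide (p e = w ∧ q e = o))
      = l.countP fun e => decide (q e = o) := by
  induction l with
  | nil => simp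
  | cons a t ih =>
    simp only [List.countP_cons, decide_eq_true_eq]
    rw [Finset.sum_add_distrib, ih]
    congr 1
    by_cases h : q a = o
    · simp [h]
    · simp [h]

end Aux

/-- a node of degree 7 of a block-decomposable graph belongs, in every
block decomposition, to exactly two blocks: a square with the node as its center
and a diamond with the node as one of its outlets. -/
theorem stmt_6 {V : Type} [Fintype V] [DecidableEq V] (G : V → V → ℕ)
    (hG : IsDiGraph G) (o : V) (ho : degree G o = 7) (D : BlockDecomposition G) :
    ∃ b b' : Fin D.n, b ≠ b' ∧
      D.shape b = BlockShape.square ∧ D.shape b' = BlockShape.diamond ∧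
      (∃ i, D.emb b i = o ∧ (i : ℕ) = 0) ∧
      (∃ j, D.emb b' j = o ∧ ((j : ℕ) = 0 ∨ (j : ℕ) = 1)) ∧
      (∀ (c : Fin D.n) (k : Fin (D.shape c).numNodes), D.emb c k = o → c = b ∨ c = b') := by
  classical
  have he : ∀ x y, G x y = D.mult x y - D.mult y x := D.edge_eq
  set md : Fin D.n → ℕ := fun b =>
    ((D.shape b).edges.countP fun e => decide (D.emb b e.1 = o)) +
    ((D.shape b).edges.countP fun e => decide (D.emb b e.2 = o)) with hmd_def
  have hS1 : (∑ w, (D.mult o w + D.mult w o))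
      = 7 + 2 * ∑ w, min (D.mult o w) (D.mult w o) := by
    rw [Finset.mul_sum, ← ho]
    unfold degree
    rw [← Finset.sum_add_distrib]
    refine Finset.sum_congr rfl fun w _ => ?_
    rw [he o w, he w o]
    omega
  have hS2 : (∑ w, (D.mult o w + D.mult w o)) = ∑ b, md b := by
    have hw : ∀ w, D.mult o w + D.mult w o
        = ∑ b, (((D.shape b).edges.countP fun e =>
            decide (D.emb b e.1 = o ∧ D.emb b e.2 = w)) +
          ((D.shape b).edges.countP fun e =>
            decide (D.emb b e.1 = w ∧ D.emb b e.2 = o))) := by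
      intro w
      rw [Finset.sum_add_distrib]
      rfl
    simp only [hw]
    rw [Finset.sum_comm]
    refine Finset.sum_congr rfl fun b _ => ?_
    rw [Finset.sum_add_distrib,
      aux_sum_countP_left ((D.shape b).edges) (fun e => D.emb b e.1) (fun e => D.emb b e.2) o,
      aux_sum_countP_right ((D.shape b).edges) (fun e => D.emb b e.1) (fun e => D.emb b e.2) o]
  have hmd_eq : ∀ b (i : Fin (D.shape b).numNodes), D.emb b i = o →
      md b = (D.shape b).blockDeg i := by
    intro b i hi
    have h1 : ((D.shape b).edges.countP fun e => decide (D.emb b e.1 = o))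
        = (D.shape b).edges.countP fun e => decide (e.1 = i) := by
      refine List.countP_congr fun e _ => ?_
      simp only [decide_eq_true_eq]
      exact ⟨fun h => D.emb_inj b (h.trans hi.symm), fun h => by rw [h, hi]⟩
    have h2 : ((D.shape b).edges.countP fun e => decide (D.emb b e.2 = o))
        = (D.shape b).edges.countP fun e => decide (e.2 = i) := by
      refine List.countP_congr fun e _ => ?_
      simp only [decide_eq_true_eq]
      exact ⟨fun h => D.emb_inj b (h.trans hi.symm), fun h => by rw [h, hi]⟩
    simp only [hmd_def]
    rw [h1, h2, aux_countsplit]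
  have hmd_zero : ∀ b, (∀ i, D.emb b i ≠ o) → md b = 0 := by
    intro b hb
    simp only [hmd_def]
    have h1 : ((D.shape b).edges.countP fun e => decide (D.emb b e.1 = o)) = 0 := by
      rw [List.countP_eq_zero]
      intro e _
      simp only [decide_eq_true_eq]
      exact hb e.1
    have h2 : ((D.shape b).edges.countP fun e => decide (D.emb b e.2 = o)) = 0 := by
      rw [List.countP_eq_zero]
      intro e _
      simp only [decide_eq_true_eq]
      exact hb e.2
    rw [h1, h2]
  obtain ⟨b₀, i₀, hi₀⟩ := D.covers o
  by_cases hex : ∃ b', b' ≠ b₀ ∧ ∃ j, D.emb b' j = o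
  · obtain ⟨b', hne, j, hj⟩ := hex
    have honly : ∀ c (k : Fin (D.shape c).numNodes), D.emb c k = o → c = b₀ ∨ c = b' := by
      intro c k hk
      rcases D.atMostTwo b₀ b' c i₀ j k (hi₀.trans hj.symm) (hi₀.trans hk.symm) with h | h | h
      · exact absurd h.symm hne
      · exact Or.inl h.symm
      · exact Or.inr h.symm
    have hsum : (∑ b, md b) = md b₀ + md b' := by
      have hsub : (∑ b, md b) = ∑ b ∈ ({b₀, b'} : Finset (Fin D.n)), md b := by
        symm
        refine Finset.sum_subset (Finset.subset_univ _) fun c _ hc => ?_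
        refine hmd_zero c fun i hi => ?_
        rcases honly c i hi with rfl | rfl <;> simp at hc
      rw [hsub, Finset.sum_pair (Ne.symm hne)]
    have hout := D.glue_outlets b' b₀ j i₀ (hj.trans hi₀.symm) hne
    have h7 : (D.shape b₀).blockDeg i₀ + (D.shape b').blockDeg j = 7 := by
      have hle1 := aux_blockDeg_le (D.shape b₀) i₀
      have hle2 := aux_blockDeg_le (D.shape b') j
      have hS := hS1
      rw [hS2, hsum, hmd_eq b₀ i₀ hi₀, hmd_eq b' j hj] at hS
      omega
    rcases aux_key _ _ _ _ hout.2 hout.1 h7 with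
      ⟨hsq, hi0, hdi, hj01⟩ | ⟨hsq, hj0, hdi, hi01⟩
    · exact ⟨b₀, b', Ne.symm hne, hsq, hdi, ⟨i₀, hi₀, hi0⟩, ⟨j, hj, hj01⟩, honly⟩
    · exact ⟨b', b₀, hne, hsq, hdi, ⟨j, hj, hj0⟩, ⟨i₀, hi₀, hi01⟩,
        fun c k hk => (honly c k hk).symm⟩
  · exfalso
    push_neg at hex
    have hsum : (∑ b, md b) = md b₀ := by
      refine Finset.sum_eq_single_of_mem b₀ (Finset.mem_univ _) fun c _ hc => ?_
      refine hmd_zero c fun i hi => ?_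
      exact hex c hc i hi
    have h4 : md b₀ ≤ 4 := by
      rw [hmd_eq b₀ i₀ hi₀]
      exact aux_blockDeg_le _ _
    have hS := hS1
    rw [hS2, hsum] at hS
    omega
end

section
/- If G is block-decomposable and o is a node of G of degree 5, then in every block decomposition of G the node o belongs to exactly two blocks, and the pair of blocks containing o is one of the following: a spike and a square (with o an endpoint of the spike identified with the center of the square), a fork and a diamond (with o the outlet of the fork identified with an outlet of the diamond), or a triangle and a diamond (with o an outlet of each). -/
/- ###################### auxiliary machinery ###################### -/

/-- Out-degree of a node inside its block. -/
def outC (s : BlockShape) (i : Fin s.numNodes) : ℕ :=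
  s.edges.countP fun e => decide (e.1 = i)

/-- In-degree of a node inside its block. -/
def inC (s : BlockShape) (i : Fin s.numNodes) : ℕ :=
  s.edges.countP fun e => decide (e.2 = i)

lemma deg_le (s : BlockShape) (i : Fin s.numNodes) : outC s i + inC s i ≤ 4 := by
  cases s <;> revert i <;> decide

lemma no_loop (s : BlockShape) (e : Fin s.numNodes × Fin s.numNodes)
    (he : e ∈ s.edges) : e.1 ≠ e.2 := by
  cases s <;> revert e <;> decide

lemma no_two_cycle (s : BlockShape) (e : Fin s.numNodes × Fin s.numNodes)
    (he : e ∈ s.edges) (he' : (e.2, e.1) ∈ s.edges) : False := by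
  cases s <;> revert e <;> decide

lemma outlet_square (s : BlockShape) (hs : s = BlockShape.square)
    (i : Fin s.numNodes) (h : s.IsOutlet i) : (i : ℕ) = 0 := by
  subst hs; exact h

open BlockShape in
lemma classify (s : BlockShape) (i : Fin s.numNodes) (h : s.IsOutlet i) :
    (s = spike ∧ outC s i + inC s i = 1) ∨
    (s = triangle ∧ outC s i + inC s i = 2) ∨
    ((s = infork ∨ s = outfork) ∧ (i : ℕ) = 2 ∧ outC s i + inC s i = 2) ∨
    (s = diamond ∧ ((i : ℕ) = 0 ∨ (i : ℕ) = 1) ∧ outC s i + inC s i = 3) ∨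
    (s = square ∧ (i : ℕ) = 0 ∧ outC s i + inC s i = 4) := by
  cases s with
  | spike => exact Or.inl ⟨rfl, by clear h; revert i; decide⟩
  | triangle => exact Or.inr (Or.inl ⟨rfl, by clear h; revert i; decide⟩)
  | infork =>
      have h' : (i : ℕ) = 2 := h
      have hi : i = (2 : Fin 3) := Fin.ext h'
      subst hi
      exact Or.inr (Or.inr (Or.inl ⟨Or.inl rfl, rfl, by decide⟩))
  | outfork =>
      have h' : (i : ℕ) = 2 := h
      have hi : i = (2 : Fin 3) := Fin.ext h'
      subst hi
      exact Or.inr (Or.inr (Or.inl ⟨Or.inr rfl, rfl, by decide⟩))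
  | diamond =>
      have h' : (i : ℕ) = 0 ∨ (i : ℕ) = 1 := h
      refine Or.inr (Or.inr (Or.inr (Or.inl ⟨rfl, h', ?_⟩)))
      rcases h' with h' | h'
      · have hi : i = (0 : Fin 4) := Fin.ext h'
        subst hi; decide
      · have hi : i = (1 : Fin 4) := Fin.ext h'
        subst hi; decide
  | square =>
      have h' : (i : ℕ) = 0 := h
      have hi : i = (0 : Fin 5) := Fin.ext h'
      subst hi
      exact Or.inr (Or.inr (Or.inr (Or.inr ⟨rfl, rfl, by decide⟩)))

lemma sum_countP_left {α V : Type} [Fintype V] [DecidableEq V] (l : List α)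
    (p : α → Prop) [DecidablePred p] (f : α → V) :
    ∑ w : V, l.countP (fun e => decide (p e ∧ f e = w)) =
      l.countP fun e => decide (p e) := by
  induction l with
  | nil => simp
  | cons a l ih =>
      simp only [List.countP_cons, Finset.sum_add_distrib, ih]
      congr 1
      by_cases hp : p a
      · simp [hp, Finset.sum_ite_eq]
      · simp [hp]

lemma sum_countP_right {α V : Type} [Fintype V] [DecidableEq V] (l : List α)
    (p : α → Prop) [DecidablePred p] (f : α → V) :
    ∑ w : V, l.countP (fun e => decide (f e = w ∧ p e)) =
      l.countP fun e => decide (p e) := by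
  induction l with
  | nil => simp
  | cons a l ih =>
      simp only [List.countP_cons, Finset.sum_add_distrib, ih]
      congr 1
      by_cases hp : p a
      · simp [hp, Finset.sum_ite_eq]
      · simp [hp]

/-- Number of block edges at `o` in block `b` (in-edges plus out-edges). -/
def Fdeg {V : Type} [Fintype V] [DecidableEq V] {G : V → V → ℕ}
    (D : BlockDecomposition G) (o : V) (b : Fin D.n) : ℕ :=
  ((D.shape b).edges.countP fun e => decide (D.emb b e.1 = o)) +
  ((D.shape b).edges.countP fun e => decide (D.emb b e.2 = o))

lemma Fdeg_eq {V : Type} [Fintype V] [DecidableEq V] {G : V → V → ℕ}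
    (D : BlockDecomposition G) (o : V) (b : Fin D.n)
    (i : Fin (D.shape b).numNodes) (hi : D.emb b i = o) :
    Fdeg D o b = outC (D.shape b) i + inC (D.shape b) i := by
  have key : ∀ x : Fin (D.shape b).numNodes, (D.emb b x = o) ↔ (x = i) :=
    fun x => ⟨fun h => D.emb_inj b (by rw [h, hi]), fun h => by rw [h, hi]⟩
  unfold Fdeg outC inC
  congr 1 <;> apply List.countP_congr <;> intro e he <;>
    simp only [decide_eq_true_eq, key]

lemma Fdeg_zero {V : Type} [Fintype V] [DecidableEq V] {G : V → V → ℕ}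
    (D : BlockDecomposition G) (o : V) (b : Fin D.n)
    (h : ∀ k, D.emb b k ≠ o) : Fdeg D o b = 0 := by
  unfold Fdeg
  have h1 : ((D.shape b).edges.countP fun e => decide (D.emb b e.1 = o)) = 0 :=
    List.countP_eq_zero.mpr fun e _ => by simpa using h e.1
  have h2 : ((D.shape b).edges.countP fun e => decide (D.emb b e.2 = o)) = 0 :=
    List.countP_eq_zero.mpr fun e _ => by simpa using h e.2
  omega

lemma sum_mult {V : Type} [Fintype V] [DecidableEq V] {G : V → V → ℕ}
    (D : BlockDecomposition G) (o : V) :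
    ∑ w, (D.mult o w + D.mult w o) = ∑ b, Fdeg D o b := by
  rw [Finset.sum_add_distrib]
  have h1 : ∑ w, D.mult o w =
      ∑ b, ((D.shape b).edges.countP fun e => decide (D.emb b e.1 = o)) := by
    show ∑ w, blockMult D.n D.shape D.emb o w = _
    unfold blockMult
    rw [Finset.sum_comm]
    exact Finset.sum_congr rfl fun b _ =>
      sum_countP_left ((D.shape b).edges) (fun e => D.emb b e.1 = o) (fun e => D.emb b e.2)
  have h2 : ∑ w, D.mult w o =
      ∑ b, ((D.shape b).edges.countP fun e => decide (D.emb b e.2 = o)) := by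
    show ∑ w, blockMult D.n D.shape D.emb w o = _
    unfold blockMult
    rw [Finset.sum_comm]
    exact Finset.sum_congr rfl fun b _ =>
      sum_countP_right ((D.shape b).edges) (fun e => D.emb b e.2 = o) (fun e => D.emb b e.1)
  rw [h1, h2, ← Finset.sum_add_distrib]
  rfl

lemma mult_pos {V : Type} [Fintype V] [DecidableEq V] {G : V → V → ℕ}
    (D : BlockDecomposition G) (x y : V) (h : 0 < D.mult x y) :
    ∃ c e, e ∈ (D.shape c).edges ∧ D.emb c e.1 = x ∧ D.emb c e.2 = y := by
  have h' : (∑ b : Fin D.n, (D.shape b).edges.countP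
      fun e => decide (D.emb b e.1 = x ∧ D.emb b e.2 = y)) ≠ 0 := h.ne'
  obtain ⟨c, -, hc⟩ := Finset.exists_ne_zero_of_sum_ne_zero h'
  obtain ⟨e, he, hpe⟩ := List.countP_pos_iff.mp (Nat.pos_of_ne_zero hc)
  simp only [decide_eq_true_eq] at hpe
  exact ⟨c, e, he, hpe.1, hpe.2⟩

lemma no_cancel {V : Type} [Fintype V] [DecidableEq V] {G : V → V → ℕ}
    (D : BlockDecomposition G) (o : V) (bS bD : Fin D.n) (hne : bS ≠ bD)
    (jS : Fin (D.shape bS).numNodes) (hjS : D.emb bS jS = o) (hjS0 : (jS : ℕ) = 0)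
    (hsq : D.shape bS = BlockShape.square)
    (honly : ∀ c k, D.emb c k = o → c = bS ∨ c = bD) (w : V) :
    D.mult o w = 0 ∨ D.mult w o = 0 := by
  by_contra hcon
  push_neg at hcon
  obtain ⟨h1, h2⟩ := hcon
  obtain ⟨c, e, he, he1, he2⟩ := mult_pos D o w (Nat.pos_of_ne_zero h1)
  obtain ⟨c', e', he', he1', he2'⟩ := mult_pos D w o (Nat.pos_of_ne_zero h2)
  by_cases hcc : c = c'
  · subst hcc
    have h3 : e.2 = e'.1 := D.emb_inj c (by rw [he2, he1'])
    have h4 : e.1 = e'.2 := D.emb_inj c (by rw [he1, he2'])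
    have : (e.2, e.1) = e' := Prod.ext h3 h4
    exact no_two_cycle _ e he (this ▸ he')
  · rcases honly c e.1 he1 with hcS | hcD
    · subst hcS
      have hw : D.emb c e.2 = D.emb c' e'.1 := by rw [he2, he1']
      obtain ⟨hOut, -⟩ := D.glue_outlets c c' e.2 e'.1 hw hcc
      have hv : (e.2 : ℕ) = 0 := outlet_square _ hsq _ hOut
      have hj : e.2 = jS := Fin.ext (by rw [hv, hjS0])
      have hwo : w = o := by rw [← he2, hj, hjS]
      exact no_loop _ e he (D.emb_inj c (by rw [he1, he2, hwo]))
    · rcases honly c' e'.2 he2' with hc'S | hc'D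
      · subst hc'S
        have hw : D.emb c' e'.1 = D.emb c e.2 := by rw [he1', he2]
        obtain ⟨hOut, -⟩ := D.glue_outlets c' c e'.1 e.2 hw (Ne.symm hcc)
        have hv : (e'.1 : ℕ) = 0 := outlet_square _ hsq _ hOut
        have hj : e'.1 = jS := Fin.ext (by rw [hv, hjS0])
        have hwo : w = o := by rw [← he1', hj, hjS]
        exact no_loop _ e' he' (D.emb_inj c' (by rw [he1', he2', hwo]))
      · exact hcc (hcD.trans hc'D.symm)

/-- a node of degree 5 of a block-decomposable graph belongs, in every
block decomposition, to exactly two blocks, which form one of the following pairs: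
spike + square (the node an endpoint of the spike and the center of the square),
fork + diamond (the node the outlet of the fork and an outlet of the diamond),
or triangle + diamond (the node an outlet of each). -/
theorem stmt_8 {V : Type} [Fintype V] [DecidableEq V] (G : V → V → ℕ)
    (hG : IsDiGraph G) (o : V) (ho : degree G o = 5) (D : BlockDecomposition G) :
    ∃ b b' : Fin D.n, b ≠ b' ∧
      (∀ (c : Fin D.n) (k : Fin (D.shape c).numNodes), D.emb c k = o → c = b ∨ c = b') ∧
      ((D.shape b = BlockShape.spike ∧ D.shape b' = BlockShape.square ∧
          (∃ i, D.emb b i = o) ∧ (∃ j, D.emb b' j = o ∧ (j : ℕ) = 0)) ∨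
       ((D.shape b = BlockShape.infork ∨ D.shape b = BlockShape.outfork) ∧
          D.shape b' = BlockShape.diamond ∧
          (∃ i, D.emb b i = o ∧ (i : ℕ) = 2) ∧
          (∃ j, D.emb b' j = o ∧ ((j : ℕ) = 0 ∨ (j : ℕ) = 1))) ∨
       (D.shape b = BlockShape.triangle ∧ D.shape b' = BlockShape.diamond ∧
          (∃ i, D.emb b i = o) ∧
          (∃ j, D.emb b' j = o ∧ ((j : ℕ) = 0 ∨ (j : ℕ) = 1)))) := by
  classical
  obtain ⟨b0, i0, hi0⟩ := D.covers o
  have hpoint : ∀ w, D.mult o w + D.mult w o =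
      (G o w + G w o) + 2 * min (D.mult o w) (D.mult w o) := by
    intro w
    have e1 : G o w = D.mult o w - D.mult w o := D.edge_eq o w
    have e2 : G w o = D.mult w o - D.mult o w := D.edge_eq w o
    omega
  have hdeg : ∑ w, (G o w + G w o) = 5 := ho
  have hS : ∑ b, Fdeg D o b = 5 + 2 * ∑ w, min (D.mult o w) (D.mult w o) := by
    rw [← sum_mult]
    calc ∑ w, (D.mult o w + D.mult w o)
        = ∑ w, ((G o w + G w o) + 2 * min (D.mult o w) (D.mult w o)) :=
          Finset.sum_congr rfl fun w _ => hpoint w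
      _ = (∑ w, (G o w + G w o)) + ∑ w, 2 * min (D.mult o w) (D.mult w o) :=
          Finset.sum_add_distrib
      _ = 5 + 2 * ∑ w, min (D.mult o w) (D.mult w o) := by
          rw [hdeg, ← Finset.mul_sum]
  by_cases htwo : ∃ c, c ≠ b0 ∧ ∃ k, D.emb c k = o
  · obtain ⟨b1, hne10, j1, hj1⟩ := htwo
    have hne : b0 ≠ b1 := fun h => hne10 h.symm
    have honly : ∀ c k, D.emb c k = o → c = b0 ∨ c = b1 := by
      intro c k hk
      rcases D.atMostTwo b0 b1 c i0 j1 k (by rw [hi0, hj1]) (by rw [hi0, hk]) with h | h | h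
      · exact absurd h hne
      · exact Or.inl h.symm
      · exact Or.inr h.symm
    have hsum2 : ∑ b, Fdeg D o b = Fdeg D o b0 + Fdeg D o b1 := by
      rw [← Finset.sum_pair hne]
      refine (Finset.sum_subset (Finset.subset_univ _) ?_).symm
      intro c _ hc
      simp only [Finset.mem_insert, Finset.mem_singleton, not_or] at hc
      refine Fdeg_zero D o c fun k hk => ?_
      rcases honly c k hk with h | h
      · exact hc.1 h
      · exact hc.2 h
    obtain ⟨hiO, hjO⟩ := D.glue_outlets b0 b1 i0 j1 (by rw [hi0, hj1]) hne
    have hd0 := Fdeg_eq D o b0 i0 hi0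
    have hd1 := Fdeg_eq D o b1 j1 hj1
    have hkey : outC (D.shape b0) i0 + inC (D.shape b0) i0 +
        (outC (D.shape b1) j1 + inC (D.shape b1) j1) =
        5 + 2 * ∑ w, min (D.mult o w) (D.mult w o) := by
      rw [← hd0, ← hd1, ← hsum2, hS]
    have hT7 : ∀ (bS bD : Fin D.n), bS ≠ bD → ∀ jS : Fin (D.shape bS).numNodes,
        D.emb bS jS = o → (jS : ℕ) = 0 → D.shape bS = BlockShape.square →
        (∀ c k, D.emb c k = o → c = bS ∨ c = bD) →
        (∑ w, min (D.mult o w) (D.mult w o)) = 0 := by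
      intro bS bD h1 jS h2 h3 h4 h5
      refine Finset.sum_eq_zero fun w _ => ?_
      rcases no_cancel D o bS bD h1 jS h2 h3 h4 h5 w with h | h <;> omega
    rcases classify _ i0 hiO with ⟨hs0, hv0⟩ | ⟨hs0, hv0⟩ | ⟨hs0, hio0, hv0⟩ |
        ⟨hs0, hio0, hv0⟩ | ⟨hs0, hio0, hv0⟩ <;>
      rcases classify _ j1 hjO with ⟨hs1, hv1⟩ | ⟨hs1, hv1⟩ | ⟨hs1, hio1, hv1⟩ |
        ⟨hs1, hio1, hv1⟩ | ⟨hs1, hio1, hv1⟩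
    -- spike, *
    · omega
    · omega
    · omega
    · omega
    · -- spike + square
      exact ⟨b0, b1, hne, honly, Or.inl ⟨hs0, hs1, ⟨i0, hi0⟩, ⟨j1, hj1, hio1⟩⟩⟩
    -- triangle, *
    · omega
    · omega
    · omega
    · -- triangle + diamond
      exact ⟨b0, b1, hne, honly, Or.inr (Or.inr ⟨hs0, hs1, ⟨i0, hi0⟩, ⟨j1, hj1, hio1⟩⟩)⟩
    · omega
    -- fork, *
    · omega
    · omega
    · omega
    · -- fork + diamond
      exact ⟨b0, b1, hne, honly, Or.inr (Or.inl ⟨hs0, hs1, ⟨i0, hi0, hio0⟩, ⟨j1, hj1, hio1⟩⟩)⟩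
    · omega
    -- diamond, *
    · omega
    · -- diamond + triangle
      exact ⟨b1, b0, hne.symm, fun c k hk => (honly c k hk).symm,
        Or.inr (Or.inr ⟨hs1, hs0, ⟨j1, hj1⟩, ⟨i0, hi0, hio0⟩⟩)⟩
    · -- diamond + fork
      exact ⟨b1, b0, hne.symm, fun c k hk => (honly c k hk).symm,
        Or.inr (Or.inl ⟨hs1, hs0, ⟨j1, hj1, hio1⟩, ⟨i0, hi0, hio0⟩⟩)⟩
    · omega
    · -- diamond + square : impossible, no cancellation
      have := hT7 b1 b0 hne.symm j1 hj1 hio1 hs1 (fun c k hk => (honly c k hk).symm)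
      omega
    -- square, *
    · -- square + spike
      exact ⟨b1, b0, hne.symm, fun c k hk => (honly c k hk).symm,
        Or.inl ⟨hs1, hs0, ⟨j1, hj1⟩, ⟨i0, hi0, hio0⟩⟩⟩
    · omega
    · omega
    · -- square + diamond : impossible
      have := hT7 b0 b1 hne i0 hi0 hio0 hs0 honly
      omega
    · omega
  · exfalso
    push_neg at htwo
    have hzero : ∀ c ∈ Finset.univ, c ∉ ({b0} : Finset (Fin D.n)) → Fdeg D o c = 0 := by
      intro c _ hc
      simp only [Finset.mem_singleton] at hc
      exact Fdeg_zero D o c (htwo c hc)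
    have hone : ∑ b, Fdeg D o b = Fdeg D o b0 := by
      rw [← Finset.sum_subset (Finset.subset_univ {b0}) hzero, Finset.sum_singleton]
    have h1 := Fdeg_eq D o b0 i0 hi0
    have h2 := deg_le (D.shape b0) i0
    omega
end

section
/- Let G be a finite directed graph without loops or 2-cycles, and let o be a node of G with exactly two outgoing edges and exactly two incoming edges, joining o to four distinct neighbors. If the two neighbors reached by the outgoing edges both have degree at least 2 in G while the two neighbors on the incoming edges both have degree 1 (or symmetrically, the two in-neighbors have degree at least 2 and the two out-neighbors have degree 1), then G is not block-decomposable. -/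
/-!
Suppose `D` decomposes `G`, and let `w` be an in-neighbour of `o`; it is a leaf. If `w` lies in
a single block, it is a spike tail or an infork prong, so `o` is a sink of that block. As `o`
has as many in- as out-edges, its second block is then a diamond glued at `q` or an outfork
glued at its centre, and the dead neighbour of `o` in it would be an in-neighbour of degree 2
or an out-neighbour of degree 1. If `w` lies in two blocks, having no in-edge and a single
out-edge forces a spike tail glued to a triangle node, and the cancellation this requires leaves
an out-neighbour of `o` of degree 1. Reversing every edge exchanges the two cases of the
degree hypothesis.
-/

namespace BlockShape

instance : Fintype BlockShape where
  elems := {spike, triangle, infork, outfork, diamond, square}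
  complete := by intro s; cases s <;> simp

instance (s : BlockShape) (i : Fin s.numNodes) : Decidable (s.IsOutlet i) := by
  cases s <;> unfold IsOutlet <;> infer_instance

def outDeg (s : BlockShape) (i : Fin s.numNodes) : ℕ :=
  s.edges.countP fun e => decide (e.1 = i)

def inDeg (s : BlockShape) (i : Fin s.numNodes) : ℕ :=
  s.edges.countP fun e => decide (e.2 = i)

theorem swap_not_mem_edges : ∀ (s : BlockShape) (e : Fin s.numNodes × Fin s.numNodes),
    e ∈ s.edges → e.swap ∉ s.edges := by decide

theorem blockDeg_eq_outDeg_add_inDeg : ∀ (s : BlockShape) (i : Fin s.numNodes),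
    s.blockDeg i = s.outDeg i + s.inDeg i := by decide

def HasDeadInNeighbor (s : BlockShape) (k : Fin s.numNodes) : Prop :=
  ∃ k', (k', k) ∈ s.edges ∧ ¬s.IsOutlet k'

def HasTwoDeadOutNeighbors (s : BlockShape) (k : Fin s.numNodes) : Prop :=
  ∃ k₁ k₂, k₁ ≠ k₂ ∧ (k, k₁) ∈ s.edges ∧ (k, k₂) ∈ s.edges ∧ ¬s.IsOutlet k₁ ∧ ¬s.IsOutlet k₂

def IsSpikeTail (s : BlockShape) (a : Fin s.numNodes) : Prop :=
  s.outDeg a = 1 ∧ s.inDeg a = 0 ∧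
    ∃ a', (a, a') ∈ s.edges ∧ s.outDeg a' = 0 ∧ s.inDeg a' = 1

def IsTriangleNode (s : BlockShape) (t : Fin s.numNodes) : Prop :=
  s.outDeg t = 1 ∧ s.inDeg t = 1 ∧ ∃ t₁ t₂, (t, t₁) ∈ s.edges ∧ (t₁, t₂) ∈ s.edges ∧
    (t₂, t) ∈ s.edges ∧ t₁ ≠ t₂ ∧ s.outDeg t₂ = 1 ∧ s.inDeg t₂ = 1

instance (s : BlockShape) (k : Fin s.numNodes) : Decidable (s.HasDeadInNeighbor k) := by
  unfold HasDeadInNeighbor; infer_instance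

instance (s : BlockShape) (k : Fin s.numNodes) : Decidable (s.HasTwoDeadOutNeighbors k) := by
  unfold HasTwoDeadOutNeighbors; infer_instance

instance (s : BlockShape) (a : Fin s.numNodes) : Decidable (s.IsSpikeTail a) := by
  unfold IsSpikeTail; infer_instance

set_option synthInstance.maxSize 2000 in
instance (s : BlockShape) (t : Fin s.numNodes) : Decidable (s.IsTriangleNode t) := by
  unfold IsTriangleNode; infer_instance

theorem outlet_cases : ∀ (s : BlockShape) (k : Fin s.numNodes), s.IsOutlet k →
    s.HasDeadInNeighbor k ∨ s.HasTwoDeadOutNeighbors k ∨ s.IsSpikeTail k ∨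
      (s.outDeg k = 0 ∧ s.inDeg k = 1) ∨ s.IsTriangleNode k := by
  decide

theorem sink_of_blockDeg_eq_one : ∀ (s : BlockShape) (i j : Fin s.numNodes), (i, j) ∈ s.edges →
    s.blockDeg i = 1 → s.outDeg j = 0 ∧ (s.inDeg j = 1 ∨ s.inDeg j = 2) := by
  decide

theorem exists_dead_inNeighbor_of_outDeg_eq_succ : ∀ (s : BlockShape) (j : Fin s.numNodes),
    s.IsOutlet j → s.outDeg j = s.inDeg j + 1 → 3 ≤ s.blockDeg j →
    ∃ k, (k, j) ∈ s.edges ∧ ¬s.IsOutlet k ∧ s.blockDeg k = 2 := by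
  decide

theorem exists_dead_outNeighbor_of_outDeg_eq_add_two : ∀ (s : BlockShape) (j : Fin s.numNodes),
    s.outDeg j = s.inDeg j + 2 → ∃ k, (j, k) ∈ s.edges ∧ ¬s.IsOutlet k ∧ s.blockDeg k = 1 := by
  decide

end BlockShape

namespace List

variable {α : Type*}

theorem sum_countP_and_decide_eq {V : Type*} [Fintype V] [DecidableEq V] (l : List α)
    (p : α → Bool) (g : α → V) :
    ∑ x : V, l.countP (fun e => p e && decide (g e = x)) = l.countP p := by
  induction l with
  | nil => simp
  | cons a l ih => cases h : p a <;> simp [List.countP_cons, Finset.sum_add_distrib, ih, h]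

theorem countP_and_eq_ite {l : List α} {p : α → Bool} {a : α} (h : l.countP p = 1)
    (ha : a ∈ l) (hpa : p a) (q : α → Bool) :
    l.countP (fun e => p e && q e) = if q a then 1 else 0 := by
  obtain ⟨y, hy⟩ := List.length_eq_one_iff.mp ((List.countP_eq_length_filter).symm.trans h)
  have hay : a = y := by simpa [hy] using List.mem_filter.mpr ⟨ha, hpa⟩
  rw [show l.countP (fun e => p e && q e) = (l.filter p).countP q by
    simp only [List.countP_filter, Bool.and_comm], hy, ← hay, List.countP_singleton]

theorem countP_and_eq_zero {l : List α} {p : α → Bool} (h : l.countP p = 0) (q : α → Bool) :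
    l.countP (fun e => p e && q e) = 0 :=
  List.countP_eq_zero.mpr fun e he hpq => by
    simp_all [List.countP_eq_zero]

end List

theorem eq_or_eq_of_sum_eq_two {α : Type*} [Fintype α] {f : α → ℕ} (hsum : ∑ x, f x = 2)
    {a b : α} (ha : f a = 1) (hb : f b = 1) (hab : a ≠ b) {u : α} (hu : 0 < f u) :
    u = a ∨ u = b := by
  classical
  by_contra! h
  have hle := Finset.sum_le_sum_of_subset (f := f) (Finset.subset_univ {a, b, u})
  rw [Finset.sum_insert (by simp [hab, Ne.symm h.1]), Finset.sum_pair (Ne.symm h.2)] at hle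
  omega

theorem degree_eq_sum_add_sum {V : Type} [Fintype V] (G : V → V → ℕ) (v : V) :
    degree G v = ∑ x, G v x + ∑ x, G x v :=
  Finset.sum_add_distrib

namespace BlockDecomposition

open BlockShape

variable {V : Type} [Fintype V] [DecidableEq V] {G : V → V → ℕ} (D : BlockDecomposition G)

def localOut (b : Fin D.n) (i : Fin (D.shape b).numNodes) (x : V) : ℕ :=
  (D.shape b).edges.countP fun e => decide (e.1 = i) && decide (D.emb b e.2 = x)

def localIn (b : Fin D.n) (i : Fin (D.shape b).numNodes) (x : V) : ℕ :=
  (D.shape b).edges.countP fun e => decide (e.2 = i) && decide (D.emb b e.1 = x)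

theorem mult_eq_sum (x y : V) : D.mult x y =
    ∑ b, (D.shape b).edges.countP fun e => decide (D.emb b e.1 = x ∧ D.emb b e.2 = y) :=
  rfl

theorem apply_eq_mult_sub (x y : V) : G x y = D.mult x y - D.mult y x :=
  D.edge_eq x y

theorem mult_pos_of_mem_edges {b : Fin D.n} {e} (he : e ∈ (D.shape b).edges) :
    0 < D.mult (D.emb b e.1) (D.emb b e.2) :=
  (D.mult_eq_sum _ _).symm ▸ Finset.sum_pos' (fun _ _ => Nat.zero_le _)
    ⟨b, Finset.mem_univ b, List.countP_pos_iff.mpr ⟨e, he, by simp⟩⟩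

theorem exists_mem_edges_of_mult_pos {x y : V} (h : 0 < D.mult x y) :
    ∃ b e, e ∈ (D.shape b).edges ∧ D.emb b e.1 = x ∧ D.emb b e.2 = y := by
  rw [mult_eq_sum] at h
  obtain ⟨b, -, hb⟩ := Finset.exists_ne_zero_of_sum_ne_zero h.ne'
  obtain ⟨e, he, hexy⟩ := List.countP_pos_iff.mp (Nat.pos_of_ne_zero hb)
  exact ⟨b, e, he, of_decide_eq_true hexy⟩

theorem eq_of_emb_eq_of_not_isOutlet {b p : Fin D.n} {i k} {v : V} (hb : D.emb b i = v)
    (hi : ¬(D.shape b).IsOutlet i) (hp : D.emb p k = v) : p = b := by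
  by_contra hpb
  exact hi (D.glue_outlets b p i k (hb.trans hp.symm) (Ne.symm hpb)).1

theorem eq_or_eq_of_emb_eq {b c p : Fin D.n} (hbc : b ≠ c) {i j k} {v : V}
    (hb : D.emb b i = v) (hc : D.emb c j = v) (hp : D.emb p k = v) : p = b ∨ p = c := by
  rcases D.atMostTwo p b c k i j (hp.trans hb.symm) (hp.trans hc.symm) with h | h | h
  exacts [Or.inl h, Or.inr h, absurd h hbc]

/-- No other block can cancel an edge at a dead end, and blocks have no 2-cycles. -/
theorem apply_pos_of_not_isOutlet {b : Fin D.n} {e} (he : e ∈ (D.shape b).edges)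
    (hdead : ¬(D.shape b).IsOutlet e.1 ∨ ¬(D.shape b).IsOutlet e.2) :
    0 < G (D.emb b e.1) (D.emb b e.2) := by
  have hrev : D.mult (D.emb b e.2) (D.emb b e.1) = 0 := by
    rw [mult_eq_sum]
    refine Finset.sum_eq_zero fun p _ => List.countP_eq_zero.mpr fun f hf hff => by
      simp only [decide_eq_true_eq] at hff
      obtain ⟨h₁, h₂⟩ := hff
      by_cases hpb : p = b
      · subst hpb
        have hfe : f = e.swap := Prod.ext (D.emb_inj p h₁) (D.emb_inj p h₂)
        exact swap_not_mem_edges _ e he (hfe ▸ hf)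
      · rcases hdead with hd | hd
        exacts [hd (D.glue_outlets p b f.2 e.1 h₂ hpb).2, hd (D.glue_outlets p b f.1 e.2 h₁ hpb).2]
  rw [D.apply_eq_mult_sub, hrev]
  exact D.mult_pos_of_mem_edges he

theorem countP_emb_eq_localOut {b : Fin D.n} {i} {v : V} (hb : D.emb b i = v) (x : V) :
    (D.shape b).edges.countP (fun e => decide (D.emb b e.1 = v ∧ D.emb b e.2 = x)) =
      D.localOut b i x :=
  List.countP_congr fun e _ => by
    simp only [decide_eq_true_eq, Bool.and_eq_true, ← hb, (D.emb_inj b).eq_iff]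

theorem countP_emb_eq_localIn {b : Fin D.n} {i} {v : V} (hb : D.emb b i = v) (x : V) :
    (D.shape b).edges.countP (fun e => decide (D.emb b e.1 = x ∧ D.emb b e.2 = v)) =
      D.localIn b i x :=
  List.countP_congr fun e _ => by
    simp only [decide_eq_true_eq, Bool.and_eq_true, ← hb, (D.emb_inj b).eq_iff, and_comm]

theorem mult_eq_localOut {b : Fin D.n} {i} {v : V} (hb : D.emb b i = v)
    (hv : ∀ p k, D.emb p k = v → p = b) (x : V) : D.mult v x = D.localOut b i x := by
  rw [mult_eq_sum, Finset.sum_eq_single b, D.countP_emb_eq_localOut hb]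
  · exact fun p _ hpb => List.countP_eq_zero.mpr fun e _ he =>
      hpb (hv p e.1 (of_decide_eq_true he).1)
  · simp

theorem mult_eq_localIn {b : Fin D.n} {i} {v : V} (hb : D.emb b i = v)
    (hv : ∀ p k, D.emb p k = v → p = b) (x : V) : D.mult x v = D.localIn b i x := by
  rw [mult_eq_sum, Finset.sum_eq_single b, D.countP_emb_eq_localIn hb]
  · exact fun p _ hpb => List.countP_eq_zero.mpr fun e _ he =>
      hpb (hv p e.2 (of_decide_eq_true he).2)
  · simp

theorem mult_eq_localOut_add {b c : Fin D.n} (hbc : b ≠ c) {i j} {v : V}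
    (hb : D.emb b i = v) (hc : D.emb c j = v) (x : V) :
    D.mult v x = D.localOut b i x + D.localOut c j x := by
  rw [mult_eq_sum, Finset.sum_eq_add_of_mem b c (Finset.mem_univ b) (Finset.mem_univ c) hbc,
    D.countP_emb_eq_localOut hb, D.countP_emb_eq_localOut hc]
  exact fun p _ hp => List.countP_eq_zero.mpr fun e _ he =>
    (D.eq_or_eq_of_emb_eq hbc hb hc (of_decide_eq_true he).1).elim hp.1 hp.2

theorem mult_eq_localIn_add {b c : Fin D.n} (hbc : b ≠ c) {i j} {v : V}
    (hb : D.emb b i = v) (hc : D.emb c j = v) (x : V) :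
    D.mult x v = D.localIn b i x + D.localIn c j x := by
  rw [mult_eq_sum, Finset.sum_eq_add_of_mem b c (Finset.mem_univ b) (Finset.mem_univ c) hbc,
    D.countP_emb_eq_localIn hb, D.countP_emb_eq_localIn hc]
  exact fun p _ hp => List.countP_eq_zero.mpr fun e _ he =>
    (D.eq_or_eq_of_emb_eq hbc hb hc (of_decide_eq_true he).2).elim hp.1 hp.2

theorem sum_localOut (b : Fin D.n) (i) : ∑ x, D.localOut b i x = (D.shape b).outDeg i :=
  List.sum_countP_and_decide_eq _ _ _

theorem sum_localIn (b : Fin D.n) (i) : ∑ x, D.localIn b i x = (D.shape b).inDeg i :=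
  List.sum_countP_and_decide_eq _ _ _

theorem localOut_eq_zero {b : Fin D.n} {i} (hi : (D.shape b).outDeg i = 0) (x : V) :
    D.localOut b i x = 0 :=
  List.countP_and_eq_zero hi _

theorem localIn_eq_zero {b : Fin D.n} {i} (hi : (D.shape b).inDeg i = 0) (x : V) :
    D.localIn b i x = 0 :=
  List.countP_and_eq_zero hi _

theorem localOut_eq_ite {b : Fin D.n} {i i'} (hi : (D.shape b).outDeg i = 1)
    (he : (i, i') ∈ (D.shape b).edges) (x : V) :
    D.localOut b i x = if D.emb b i' = x then 1 else 0 := by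
  rw [localOut, List.countP_and_eq_ite hi he (by simp)]
  simp

theorem localIn_eq_ite {b : Fin D.n} {i i'} (hi : (D.shape b).inDeg i = 1)
    (he : (i', i) ∈ (D.shape b).edges) (x : V) :
    D.localIn b i x = if D.emb b i' = x then 1 else 0 := by
  rw [localIn, List.countP_and_eq_ite hi he (by simp)]
  simp

theorem sum_mult_of_two {b c : Fin D.n} (hbc : b ≠ c) {i j} {v : V}
    (hb : D.emb b i = v) (hc : D.emb c j = v) :
    ∑ x, D.mult v x = (D.shape b).outDeg i + (D.shape c).outDeg j ∧
      ∑ x, D.mult x v = (D.shape b).inDeg i + (D.shape c).inDeg j := by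
  simp only [D.mult_eq_localOut_add hbc hb hc, D.mult_eq_localIn_add hbc hb hc,
    Finset.sum_add_distrib, sum_localOut, sum_localIn, and_self]

/-- At a vertex lying in a single block no two block edges cancel. -/
theorem degree_eq_blockDeg {b : Fin D.n} {i} {v : V} (hb : D.emb b i = v)
    (hv : ∀ p k, D.emb p k = v → p = b) : degree G v = (D.shape b).blockDeg i := by
  have hpoint : ∀ x, G v x + G x v = D.localOut b i x + D.localIn b i x := fun x => by
    have hcancel : D.localOut b i x = 0 ∨ D.localIn b i x = 0 := by
      by_contra! h
      obtain ⟨e, he, hei⟩ := List.countP_pos_iff.mp (Nat.pos_of_ne_zero h.1)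
      obtain ⟨f, hf, hfi⟩ := List.countP_pos_iff.mp (Nat.pos_of_ne_zero h.2)
      simp only [Bool.and_eq_true, decide_eq_true_eq] at hei hfi
      have hfe : f = e.swap :=
        Prod.ext (D.emb_inj b (hfi.2.trans hei.2.symm)) (hfi.1.trans hei.1.symm)
      exact swap_not_mem_edges _ e he (hfe ▸ hf)
    rw [D.apply_eq_mult_sub, D.apply_eq_mult_sub x, D.mult_eq_localOut hb hv,
      D.mult_eq_localIn hb hv]
    omega
  rw [degree, Finset.sum_congr rfl fun x _ => hpoint x, Finset.sum_add_distrib, sum_localOut,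
    sum_localIn, blockDeg_eq_outDeg_add_inDeg]

theorem degree_le_sum_mult (v : V) : degree G v ≤ ∑ x, (D.mult v x + D.mult x v) :=
  Finset.sum_le_sum fun x _ => by
    rw [D.apply_eq_mult_sub, D.apply_eq_mult_sub x]
    omega

theorem sum_sub_sum_eq (v : V) :
    ((∑ x, G v x : ℕ) : ℤ) - (∑ x, G x v : ℕ) =
      ((∑ x, D.mult v x : ℕ) : ℤ) - (∑ x, D.mult x v : ℕ) := by
  push_cast
  rw [← Finset.sum_sub_distrib, ← Finset.sum_sub_distrib]
  refine Finset.sum_congr rfl fun x _ => ?_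
  rw [D.apply_eq_mult_sub, D.apply_eq_mult_sub x]
  omega

theorem sum_in_pos_of_hasDeadInNeighbor {b : Fin D.n} {k} {v : V} (hb : D.emb b k = v)
    (hk : (D.shape b).HasDeadInNeighbor k) : 0 < ∑ x, G x v := by
  obtain ⟨k', hk'k, hk'⟩ := hk
  have hpos := D.apply_pos_of_not_isOutlet hk'k (Or.inl hk')
  rw [hb] at hpos
  exact Finset.sum_pos' (fun _ _ => Nat.zero_le _) ⟨_, Finset.mem_univ _, hpos⟩

theorem two_le_sum_out_of_hasTwoDeadOutNeighbors {b : Fin D.n} {k} {v : V}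
    (hb : D.emb b k = v) (hk : (D.shape b).HasTwoDeadOutNeighbors k) : 2 ≤ ∑ x, G v x := by
  obtain ⟨k₁, k₂, hk₁₂, hkk₁, hkk₂, hk₁, hk₂⟩ := hk
  have hpos₁ := D.apply_pos_of_not_isOutlet hkk₁ (Or.inr hk₁)
  have hpos₂ := D.apply_pos_of_not_isOutlet hkk₂ (Or.inr hk₂)
  dsimp only at hpos₁ hpos₂
  rw [hb] at hpos₁ hpos₂
  have hle := Finset.sum_le_sum_of_subset (f := G v)
    (Finset.subset_univ {D.emb b k₁, D.emb b k₂})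
  rw [Finset.sum_pair ((D.emb_inj b).ne hk₁₂)] at hle
  omega

/-- The spike edge `a → a'` must cancel the triangle edge `t₂ → t` (the leaf `w` has no
in-edges), which forces `t₁ ↦ o`; then `u = a' = t₂` has `o` as its only neighbour. -/
theorem false_of_isSpikeTail_of_isTriangleNode {w o : V} (hwo : w ≠ o)
    (hw_in : ∑ x, G x w = 0) (hG_wo : 0 < G w o) (hsucc : ∀ u, 0 < G o u → 2 ≤ degree G u)
    {S T : Fin D.n} (hST : S ≠ T) {a t} (ha : D.emb S a = w) (ht : D.emb T t = w)
    (hSa : (D.shape S).IsSpikeTail a) (hTt : (D.shape T).IsTriangleNode t) : False := by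
  obtain ⟨ha_out, ha_in, a', haa', ha'_out, ha'_in⟩ := hSa
  obtain ⟨ht_out, ht_in, t₁, t₂, htt₁, ht₁t₂, ht₂t, ht₁₂, ht₂_out, ht₂_in⟩ := hTt
  have hw_mult_out : ∀ x, D.mult w x =
      (if D.emb S a' = x then 1 else 0) + (if D.emb T t₁ = x then 1 else 0) := fun x => by
    rw [D.mult_eq_localOut_add hST ha ht, D.localOut_eq_ite ha_out haa',
      D.localOut_eq_ite ht_out htt₁]
  have hw_mult_in : ∀ x, D.mult x w = if D.emb T t₂ = x then 1 else 0 := fun x => by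
    rw [D.mult_eq_localIn_add hST ha ht, D.localIn_eq_zero ha_in, D.localIn_eq_ite ht_in ht₂t,
      zero_add]
  have hT₁₂ : D.emb T t₁ ≠ D.emb T t₂ := (D.emb_inj T).ne ht₁₂
  have hu : D.emb S a' = D.emb T t₂ := by
    by_contra h
    have hG : G (D.emb T t₂) w = 1 := by
      rw [D.apply_eq_mult_sub, hw_mult_out, hw_mult_in]
      simp [h, hT₁₂]
    have hle := Finset.single_le_sum (f := fun x => G x w) (fun _ _ => Nat.zero_le _)
      (Finset.mem_univ (D.emb T t₂))
    omega
  have ho : D.emb T t₁ = o := by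
    by_contra h
    rw [D.apply_eq_mult_sub, hw_mult_out, hw_mult_in, hu] at hG_wo
    simp only [h, if_false, add_zero, Nat.sub_self, lt_self_iff_false] at hG_wo
  set u := D.emb T t₂
  have hu_out : ∀ x, D.mult u x = if w = x then 1 else 0 := fun x => by
    rw [D.mult_eq_localOut_add hST hu rfl, D.localOut_eq_zero ha'_out,
      D.localOut_eq_ite ht₂_out ht₂t, ht, zero_add]
  have hu_in : ∀ x, D.mult x u = (if w = x then 1 else 0) + (if o = x then 1 else 0) :=
    fun x => by
      rw [D.mult_eq_localIn_add hST hu rfl, D.localIn_eq_ite ha'_in haa',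
        D.localIn_eq_ite ht₂_in ht₁t₂, ha, ho]
  have hG_u : ∀ x, G u x + G x u = if o = x then 1 else 0 := fun x => by
    rw [D.apply_eq_mult_sub, D.apply_eq_mult_sub x, hu_out, hu_in]
    split_ifs <;> omega
  have hdeg_u : degree G u = 1 := by simp [degree, hG_u]
  have hG_ou : 0 < G o u := by
    rw [D.apply_eq_mult_sub, hu_out, hu_in]
    simp [hwo]
  have := hsucc u hG_ou
  omega

theorem false_of_leaf_in_two_blocks {w o : V} (hwo : w ≠ o) (hw_out : ∑ x, G w x = 1)
    (hw_in : ∑ x, G x w = 0) (hG_wo : 0 < G w o) (hsucc : ∀ u, 0 < G o u → 2 ≤ degree G u)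
    {b c : Fin D.n} (hbc : b ≠ c) {i j} (hb : D.emb b i = w) (hc : D.emb c j = w) : False := by
  have hnet := D.sum_sub_sum_eq w
  rw [hw_out, hw_in, (D.sum_mult_of_two hbc hb hc).1, (D.sum_mult_of_two hbc hb hc).2] at hnet
  have hcases : ∀ {p q : Fin D.n} {k l}, D.emb p k = w → D.emb q l = w → q ≠ p →
      (D.shape p).IsSpikeTail k ∨ ((D.shape p).outDeg k = 0 ∧ (D.shape p).inDeg k = 1) ∨
        (D.shape p).IsTriangleNode k := by
    intro p q k l hp hq hqp
    rcases outlet_cases _ k (D.glue_outlets p q k l (hp.trans hq.symm) hqp.symm).1 with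
      h | h | h
    · have := D.sum_in_pos_of_hasDeadInNeighbor hp h
      omega
    · have := D.two_le_sum_out_of_hasTwoDeadOutNeighbors hp h
      omega
    · exact h
  rcases hcases hb hc hbc.symm with hb' | hb' | hb' <;>
    rcases hcases hc hb hbc with hc' | hc' | hc'
  all_goals first
    | exact D.false_of_isSpikeTail_of_isTriangleNode hwo hw_in hG_wo hsucc hbc hb hc hb' hc'
    | exact D.false_of_isSpikeTail_of_isTriangleNode hwo hw_in hG_wo hsucc hbc.symm hc hb hc' hb'
    | ((try simp only [IsSpikeTail, IsTriangleNode] at hb' hc'); omega)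

theorem false_of_outDeg_eq_zero {o : V} (hout : ∑ x, G o x = 2) (hin : ∑ x, G x o = 2)
    (hsucc : ∀ u, 0 < G o u → 2 ≤ degree G u) (hpred : ∀ u, 0 < G u o → degree G u = 1)
    {b : Fin D.n} {i} (hb : D.emb b i = o) (hi_out : (D.shape b).outDeg i = 0)
    (hi_in : (D.shape b).inDeg i = 1 ∨ (D.shape b).inDeg i = 2) : False := by
  by_cases hsingle : ∀ p k, D.emb p k = o → p = b
  · have hzero : ∀ x, G o x = 0 := fun x => by
      rw [D.apply_eq_mult_sub, D.mult_eq_localOut hb hsingle, D.localOut_eq_zero hi_out,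
        Nat.zero_sub]
    simp [hzero] at hout
  · push Not at hsingle
    obtain ⟨c, j, hc, hcb⟩ := hsingle
    have hj := (D.glue_outlets c b j i (hc.trans hb.symm) hcb).1
    have hdead_degree : ∀ {k}, ¬(D.shape c).IsOutlet k → degree G (D.emb c k) =
        (D.shape c).blockDeg k := fun hk =>
      D.degree_eq_blockDeg rfl fun _ _ => D.eq_of_emb_eq_of_not_isOutlet rfl hk
    obtain ⟨hsum_out, hsum_in⟩ := D.sum_mult_of_two hcb.symm hb hc
    have hnet := D.sum_sub_sum_eq o
    rw [hout, hin, hsum_out, hsum_in, hi_out] at hnet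
    have hdeg := D.degree_le_sum_mult o
    rw [degree_eq_sum_add_sum, Finset.sum_add_distrib, hout, hin, hsum_out, hsum_in,
      hi_out] at hdeg
    rcases hi_in with h | h
    · obtain ⟨k, hkj, hk, hk_deg⟩ := exists_dead_inNeighbor_of_outDeg_eq_succ _ j hj
        (by omega) (by rw [blockDeg_eq_outDeg_add_inDeg]; omega)
      have hpos : 0 < G (D.emb c k) o := hc ▸ D.apply_pos_of_not_isOutlet hkj (Or.inl hk)
      have := hpred _ hpos
      rw [hdead_degree hk] at this
      omega
    · obtain ⟨k, hjk, hk, hk_deg⟩ := exists_dead_outNeighbor_of_outDeg_eq_add_two _ j (by omega)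
      have hpos : 0 < G o (D.emb c k) := hc ▸ D.apply_pos_of_not_isOutlet hjk (Or.inr hk)
      have := hsucc _ hpos
      rw [hdead_degree hk] at this
      omega

end BlockDecomposition

theorem not_decomposable_of_leaf_inNeighbors {V : Type} [Fintype V] [DecidableEq V]
    {G : V → V → ℕ} {o : V} (hout : ∑ x, G o x = 2) (hin : ∑ x, G x o = 2)
    (hsucc : ∀ u, 0 < G o u → 2 ≤ degree G u) (hpred : ∀ u, 0 < G u o → degree G u = 1) :
    ¬Decomposable G := by
  rintro ⟨D⟩
  obtain ⟨w, -, hG_wo⟩ := Finset.exists_ne_zero_of_sum_ne_zero (hin.trans_ne two_ne_zero)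
  replace hG_wo := Nat.pos_of_ne_zero hG_wo
  have hw_deg := hpred w hG_wo
  have hle := Finset.single_le_sum (f := G w) (fun _ _ => Nat.zero_le _) (Finset.mem_univ o)
  obtain ⟨hw_out, hw_in⟩ : ∑ x, G w x = 1 ∧ ∑ x, G x w = 0 := by
    rw [degree_eq_sum_add_sum] at hw_deg
    omega
  have hwo : w ≠ o := by
    rintro rfl
    omega
  obtain ⟨b, e, he, hb, hbo⟩ := D.exists_mem_edges_of_mult_pos (x := w) (y := o)
    (by have := D.apply_eq_mult_sub w o; omega)
  by_cases hsingle : ∀ p k, D.emb p k = w → p = b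
  · have hblock := D.degree_eq_blockDeg hb hsingle
    obtain ⟨he_out, he_in⟩ := BlockShape.sink_of_blockDeg_eq_one _ e.1 e.2 he (by omega)
    exact D.false_of_outDeg_eq_zero hout hin hsucc hpred hbo he_out he_in
  · push Not at hsingle
    obtain ⟨c, j, hc, hcb⟩ := hsingle
    exact D.false_of_leaf_in_two_blocks hwo hw_out hw_in hG_wo hsucc hcb.symm hb hc

namespace BlockShape

def reverse : BlockShape → BlockShape
  | spike => spike
  | triangle => triangle
  | infork => outfork
  | outfork => infork
  | diamond => diamond
  | square => square

/-- The nodes of the reversed shape are relabelled so that its edges are exactly the reversed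
edges of `s`. -/
def reverseNode : (s : BlockShape) → Fin s.reverse.numNodes → Fin s.numNodes
  | spike => (![1, 0] : Fin 2 → Fin 2)
  | triangle => (![1, 0, 2] : Fin 3 → Fin 3)
  | infork => (![0, 1, 2] : Fin 3 → Fin 3)
  | outfork => (![0, 1, 2] : Fin 3 → Fin 3)
  | diamond => (![1, 0, 2, 3] : Fin 4 → Fin 4)
  | square => (![0, 2, 1, 4, 3] : Fin 5 → Fin 5)

theorem reverseNode_injective : ∀ s : BlockShape, Function.Injective s.reverseNode := by
  decide

theorem reverseNode_surjective : ∀ s : BlockShape, Function.Surjective s.reverseNode := by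
  decide

theorem isOutlet_reverse_iff : ∀ (s : BlockShape) (i : Fin s.reverse.numNodes),
    s.reverse.IsOutlet i ↔ s.IsOutlet (s.reverseNode i) := by
  decide

theorem map_edges_reverse_perm : ∀ s : BlockShape,
    (s.reverse.edges.map fun e => (s.reverseNode e.2, s.reverseNode e.1)).Perm s.edges := by
  decide

end BlockShape

section Reverse

variable {V : Type} [Fintype V] [DecidableEq V] {G : V → V → ℕ}

open BlockShape

def BlockDecomposition.reverse (D : BlockDecomposition G) :
    BlockDecomposition (fun x y => G y x) where
  n := D.n
  shape b := (D.shape b).reverse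
  emb b i := D.emb b ((D.shape b).reverseNode i)
  emb_inj b := (D.emb_inj b).comp (reverseNode_injective _)
  glue_outlets b c i j h hbc := by
    simpa only [isOutlet_reverse_iff] using D.glue_outlets b c _ _ h hbc
  atMostTwo b c d i j k := D.atMostTwo b c d _ _ _
  covers v := by
    obtain ⟨b, i, hi⟩ := D.covers v
    obtain ⟨k, rfl⟩ := reverseNode_surjective _ i
    exact ⟨b, k, hi⟩
  edge_eq x y := by
    have hmult : ∀ x y : V, blockMult D.n (fun b => (D.shape b).reverse)
        (fun b i => D.emb b ((D.shape b).reverseNode i)) x y = D.mult y x := fun x y =>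
      Finset.sum_congr rfl fun b _ => by
        rw [← (map_edges_reverse_perm (D.shape b)).countP_eq, List.countP_map]
        exact List.countP_congr fun e _ => by simp [and_comm]
    rw [hmult, hmult]
    exact D.edge_eq y x

theorem Decomposable.reverse (h : Decomposable G) : Decomposable (fun x y => G y x) :=
  h.map BlockDecomposition.reverse

end Reverse

theorem degree_reverse {V : Type} [Fintype V] (G : V → V → ℕ) (v : V) :
    degree (fun x y => G y x) v = degree G v :=
  Finset.sum_congr rfl fun _ _ => Nat.add_comm _ _

theorem stmt_12_general {V : Type} [Fintype V] [DecidableEq V] (G : V → V → ℕ)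
    (o w1 w2 w3 w4 : V)
    (hdist : [o, w1, w2, w3, w4].Nodup)
    (h1 : G o w1 = 1) (h2 : G o w2 = 1) (h3 : G w3 o = 1) (h4 : G w4 o = 1)
    (hout : (∑ w, G o w) = 2) (hin : (∑ w, G w o) = 2)
    (hdeg : (2 ≤ degree G w1 ∧ 2 ≤ degree G w2 ∧ degree G w3 = 1 ∧ degree G w4 = 1) ∨
      (degree G w1 = 1 ∧ degree G w2 = 1 ∧ 2 ≤ degree G w3 ∧ 2 ≤ degree G w4)) :
    ¬ Decomposable G := by
  have hsucc : ∀ u, 0 < G o u → u = w1 ∨ u = w2 :=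
    fun _ => eq_or_eq_of_sum_eq_two hout h1 h2 fun h => by simp [h] at hdist
  have hpred : ∀ u, 0 < G u o → u = w3 ∨ u = w4 :=
    fun _ => eq_or_eq_of_sum_eq_two hin h3 h4 fun h => by simp [h] at hdist
  rcases hdeg with ⟨hd1, hd2, hd3, hd4⟩ | ⟨hd1, hd2, hd3, hd4⟩
  · refine not_decomposable_of_leaf_inNeighbors hout hin (fun u hu => ?_) (fun u hu => ?_)
    · rcases hsucc u hu with rfl | rfl <;> assumption
    · rcases hpred u hu with rfl | rfl <;> assumption
  · refine fun hD => not_decomposable_of_leaf_inNeighbors (G := fun x y => G y x) hin hout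
      (fun u hu => ?_) (fun u hu => ?_) hD.reverse
    · rw [degree_reverse]
      rcases hpred u hu with rfl | rfl <;> assumption
    · rw [degree_reverse]
      rcases hsucc u hu with rfl | rfl <;> assumption

/-- if a node `o` has exactly two outgoing and two incoming edges joining
it to four distinct neighbors, and the two out-neighbors have degree at least 2 while
the two in-neighbors have degree 1 (or symmetrically), then `G` is not
block-decomposable. -/
theorem stmt_12 {V : Type} [Fintype V] [DecidableEq V] (G : V → V → ℕ)
    (hG : IsDiGraph G) (o w1 w2 w3 w4 : V)
    (hdist : [o, w1, w2, w3, w4].Nodup)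
    (h1 : G o w1 = 1) (h2 : G o w2 = 1) (h3 : G w3 o = 1) (h4 : G w4 o = 1)
    (hout : (∑ w, G o w) = 2) (hin : (∑ w, G w o) = 2)
    (hdeg : (2 ≤ degree G w1 ∧ 2 ≤ degree G w2 ∧ degree G w3 = 1 ∧ degree G w4 = 1) ∨
      (degree G w1 = 1 ∧ degree G w2 = 1 ∧ 2 ≤ degree G w3 ∧ 2 ≤ degree G w4)) :
    ¬ Decomposable G :=
  stmt_12_general G o w1 w2 w3 w4 hdist h1 h2 h3 h4 hout hin hdeg
end
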